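/- arXiv:2408.13956 — 8 statements merged into one kernel-verified Lean document; each statement's English description precedes it below -/
import Mathlib

section
/- For every γ ∈ (0,1) there exists a function G : [0,1] → ℝ which is continuous, monotone increasing and concave on [0,1], with G(0) = 0 and G(x) > 0 for x ∈ (0,1], together with a strictly decreasing sequence (x_n) in (0,1) converging to 0 such that x_n·G(x_n)·(−log x_n) ∈ (0,1] for every n and G(x_n·G(x_n)·(−log x_n)) / G(x_n) ≥ (1/2)·log(−log x_n) for every n. In particular, limsup_{x→0⁺} G(x·G(x)·(−log x)) / G(x) = ∞. -/
/-!
Put `ℓₙ = 4 ^ (n + 2)` (`scale n`), `xₙ = exp (-exp ℓₙ)`, `yₙ = ℓₙ xₙ` and prescribe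
`G xₙ = uₙ = ℓₙ e^{-ℓₙ}`, `G yₙ = vₙ = (ℓₙ / 2) uₙ`. Then `xₙ G(xₙ) (-log xₙ) = yₙ`, so the ratio
in question is `ℓₙ / 2 = ½ log (-log xₙ)`. Because `xₙ₊₁` is doubly exponentially smaller than
`xₙ`, the chord slopes of the data along the knots `… < x₁ < y₁ < x₀ < y₀` increase towards `0`.
The piecewise linear interpolant is then a sum of ramps `t ↦ d_m min t τ_m` with nonnegative
weights `d_m` (the jumps of the slope), hence continuous, monotone and concave, and it vanishes
at `0`.
-/

open Real Filter Set Topology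

theorem ConcaveOn.tsum {ι E : Type*} [Nonempty ι] [AddCommMonoid E] [Module ℝ E] {s : Set E}
    {f : ι → E → ℝ} (hf : ∀ i, ConcaveOn ℝ s (f i)) (hs : ∀ z ∈ s, Summable fun i => f i z) :
    ConcaveOn ℝ s fun z => ∑' i, f i z := by
  have hconv := (hf (Classical.arbitrary ι)).1
  refine ⟨hconv, fun p hp q hq a b ha hb hab => ?_⟩
  simp only [smul_eq_mul]
  rw [← (hs p hp).tsum_mul_left, ← (hs q hq).tsum_mul_left,
    ← ((hs p hp).mul_left a).tsum_add ((hs q hq).mul_left b)]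
  refine Summable.tsum_le_tsum (fun i => ?_) (((hs p hp).mul_left a).add ((hs q hq).mul_left b))
    (hs _ (hconv hp hq ha hb hab))
  simpa only [smul_eq_mul] using (hf i).2 hp hq ha hb hab

noncomputable def rampSum (d τ : ℕ → ℝ) (t : ℝ) : ℝ := ∑' m, d m * min t (τ m)

section RampSum

variable {d τ : ℕ → ℝ}

theorem rampSum_zero (hτ : ∀ m, 0 ≤ τ m) : rampSum d τ 0 = 0 := by
  simp [rampSum, hτ]

variable (hd : ∀ m, 0 ≤ d m) (hτ : ∀ m, 0 ≤ τ m) (hdτ : Summable fun m => d m * τ m)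
include hd hτ hdτ

theorem summable_rampSum {t : ℝ} (ht : 0 ≤ t) : Summable fun m => d m * min t (τ m) :=
  hdτ.of_nonneg_of_le (fun m => mul_nonneg (hd m) (le_min ht (hτ m)))
    fun m => mul_le_mul_of_nonneg_left (min_le_right _ _) (hd m)

theorem continuousOn_rampSum : ContinuousOn (rampSum d τ) (Ici 0) := by
  refine continuousOn_tsum (fun m => by fun_prop) hdτ fun m t ht => ?_
  rw [Real.norm_of_nonneg (mul_nonneg (hd m) (le_min ht (hτ m)))]
  exact mul_le_mul_of_nonneg_left (min_le_right _ _) (hd m)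

theorem monotoneOn_rampSum : MonotoneOn (rampSum d τ) (Ici 0) :=
  fun _ hs _ ht hst => Summable.tsum_le_tsum
    (fun m => mul_le_mul_of_nonneg_left (min_le_min_right _ hst) (hd m))
    (summable_rampSum hd hτ hdτ hs) (summable_rampSum hd hτ hdτ ht)

theorem concaveOn_rampSum : ConcaveOn ℝ (Ici 0) (rampSum d τ) :=
  ConcaveOn.tsum (fun m => ((concaveOn_id (convex_Ici 0)).inf
    (concaveOn_const (τ m) (convex_Ici 0))).smul (hd m))
    fun _ ht => summable_rampSum hd hτ hdτ ht

theorem rampSum_apply_of_antitone (hτa : Antitone τ) (m : ℕ) :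
    rampSum d τ (τ m) = (∑ k ∈ Finset.range m, d k) * τ m + ∑' k, d (k + m) * τ (k + m) := by
  rw [rampSum, ← (summable_rampSum hd hτ hdτ (hτ m)).sum_add_tsum_nat_add m, Finset.sum_mul]
  congr 1
  · exact Finset.sum_congr rfl fun k hk =>
      by rw [min_eq_left (hτa (Finset.mem_range.1 hk).le)]
  · exact tsum_congr fun k => by rw [min_eq_right (hτa (Nat.le_add_left m k))]

end RampSum

/-- `chordSlope τ g m` is the slope of the interpolant on `[τ m, τ (m - 1)]`; it is `0` to the
right of `τ 0`. -/
noncomputable def chordSlope (τ g : ℕ → ℝ) : ℕ → ℝ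
  | 0 => 0
  | m + 1 => (g m - g (m + 1)) / (τ m - τ (m + 1))

section Interpolation

variable {τ g : ℕ → ℝ} (hτ : StrictAnti τ) (hτ0 : Tendsto τ atTop (𝓝 0))

include hτ hτ0 in
theorem StrictAnti.pos_of_tendsto_zero (m : ℕ) : 0 < τ m :=
  (hτ.antitone.le_of_tendsto hτ0 (m + 1)).trans_lt (hτ (lt_add_one m))

include hτ in
theorem chordSlope_succ_mul (m : ℕ) :
    chordSlope τ g (m + 1) * (τ m - τ (m + 1)) = g m - g (m + 1) :=
  div_mul_cancel₀ _ (sub_ne_zero.2 (hτ (lt_add_one m)).ne')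

variable (hs : Monotone (chordSlope τ g))

include hτ hs in
theorem chordSlope_mul_sub_le {m k : ℕ} (hmk : m ≤ k) :
    chordSlope τ g m * (τ m - τ k) ≤ g m - g k := by
  induction k, hmk using Nat.le_induction with
  | base => simp
  | succ k hmk ih =>
    have hslope := mul_le_mul_of_nonneg_right (hs (hmk.trans k.le_succ))
      (sub_nonneg.2 (hτ.antitone k.le_succ))
    linarith [chordSlope_succ_mul (g := g) hτ k]

variable (hg0 : Tendsto g atTop (𝓝 0))

include hτ hτ0 hs hg0 in
theorem chordSlope_mul_le (m : ℕ) : chordSlope τ g m * τ m ≤ g m := by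
  have hlhs : Tendsto (fun k => chordSlope τ g m * (τ m - τ k)) atTop
      (𝓝 (chordSlope τ g m * τ m)) := by
    simpa using (tendsto_const_nhds.sub hτ0).const_mul (chordSlope τ g m)
  have hrhs : Tendsto (fun k => g m - g k) atTop (𝓝 (g m)) := by
    simpa using tendsto_const_nhds.sub hg0
  exact le_of_tendsto_of_tendsto hlhs hrhs
    (eventually_atTop.2 ⟨m, fun k hk => chordSlope_mul_sub_le hτ hs hk⟩)

include hτ hτ0 hs hg0 in
theorem hasSum_chordSlope_sub_mul (m : ℕ) :
    HasSum (fun k => (chordSlope τ g (k + m + 1) - chordSlope τ g (k + m)) * τ (k + m))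
      (g m - chordSlope τ g m * τ m) := by
  set c : ℕ → ℝ := fun k => g k - chordSlope τ g k * τ k
  have hc_nonneg k : 0 ≤ c k := sub_nonneg.2 (chordSlope_mul_le hτ hτ0 hs hg0 k)
  have hc_le k : c k ≤ g k := sub_le_self _ (mul_nonneg
    (by simpa [chordSlope] using hs k.zero_le) (hτ.pos_of_tendsto_zero hτ0 k).le)
  have hc0 : Tendsto (fun k => c (k + m)) atTop (𝓝 0) :=
    squeeze_zero (fun k => hc_nonneg _) (fun k => hc_le _) (hg0.comp (tendsto_add_atTop_nat m))
  have htelescope k : (chordSlope τ g (k + 1) - chordSlope τ g k) * τ k = c k - c (k + 1) := by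
    linarith [chordSlope_succ_mul (g := g) hτ k]
  have hpartial N : ∑ k ∈ Finset.range N,
      (chordSlope τ g (k + m + 1) - chordSlope τ g (k + m)) * τ (k + m) = c m - c (N + m) := by
    simp_rw [htelescope, add_right_comm _ m 1]
    simpa using Finset.sum_range_sub' (fun k => c (k + m)) N
  rw [hasSum_iff_tendsto_nat_of_nonneg fun k => mul_nonneg (sub_nonneg.2 (hs (k + m).le_succ))
    (hτ.pos_of_tendsto_zero hτ0 _).le]
  simp_rw [hpartial]
  simpa using tendsto_const_nhds.sub hc0

end Interpolation

theorem exists_concaveOn_interpolant {τ g : ℕ → ℝ} (hτ : StrictAnti τ)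
    (hτ0 : Tendsto τ atTop (𝓝 0)) (hg0 : Tendsto g atTop (𝓝 0))
    (hs : Monotone (chordSlope τ g)) :
    ∃ G : ℝ → ℝ, ContinuousOn G (Ici 0) ∧ MonotoneOn G (Ici 0) ∧ ConcaveOn ℝ (Ici 0) G ∧
      G 0 = 0 ∧ ∀ m, G (τ m) = g m := by
  have hd k : 0 ≤ chordSlope τ g (k + 1) - chordSlope τ g k := sub_nonneg.2 (hs k.le_succ)
  have hτnn k : 0 ≤ τ k := (hτ.pos_of_tendsto_zero hτ0 k).le
  have hsum : Summable fun k => (chordSlope τ g (k + 1) - chordSlope τ g k) * τ k := by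
    simpa using (hasSum_chordSlope_sub_mul hτ hτ0 hs hg0 0).summable
  refine ⟨rampSum _ τ, continuousOn_rampSum hd hτnn hsum, monotoneOn_rampSum hd hτnn hsum,
    concaveOn_rampSum hd hτnn hsum, rampSum_zero hτnn, fun m => ?_⟩
  rw [rampSum_apply_of_antitone hd hτnn hsum hτ.antitone, Finset.sum_range_sub,
    (hasSum_chordSlope_sub_mul hτ hτ0 hs hg0 m).tsum_eq, chordSlope, sub_zero]
  ring

theorem sixteen_mul_le_exp_three_mul {L : ℝ} (hL : 3 ≤ L) : 16 * L ≤ exp (3 * L) := by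
  nlinarith [quadratic_le_exp_of_nonneg (x := 3 * L) (by linarith)]

theorem exp_neg_four_mul (L : ℝ) : exp (-(4 * L)) = exp (-L) * exp (-(3 * L)) := by
  rw [← exp_add]; ring_nf

namespace LossModulus

noncomputable def scale (n : ℕ) : ℝ := 4 ^ (n + 2)

noncomputable def x (n : ℕ) : ℝ := exp (-exp (scale n))

noncomputable def y (n : ℕ) : ℝ := scale n * x n

noncomputable def u (n : ℕ) : ℝ := scale n * exp (-scale n)

noncomputable def v (n : ℕ) : ℝ := scale n / 2 * u n

theorem scale_succ (n : ℕ) : scale (n + 1) = 4 * scale n := by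
  rw [scale, scale, pow_succ]; ring

theorem sixteen_le_scale (n : ℕ) : 16 ≤ scale n := by
  rw [scale, pow_add]
  nlinarith [one_le_pow₀ (M₀ := ℝ) (a := 4) (by norm_num) (n := n)]

theorem scale_strictMono : StrictMono scale :=
  fun _ _ h => pow_lt_pow_right₀ (by norm_num) (by omega)

theorem tendsto_scale : Tendsto scale atTop atTop :=
  (tendsto_pow_atTop_atTop_of_one_lt (by norm_num : (1 : ℝ) < 4)).comp (tendsto_add_atTop_nat 2)

theorem x_pos (n : ℕ) : 0 < x n := exp_pos _

theorem u_pos (n : ℕ) : 0 < u n := mul_pos (by linarith [sixteen_le_scale n]) (exp_pos _)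

theorem x_lt_y (n : ℕ) : x n < y n := by
  rw [y]; nlinarith [x_pos n, sixteen_le_scale n]

theorem y_pos (n : ℕ) : 0 < y n := (x_pos n).trans (x_lt_y n)

theorem y_le_u (n : ℕ) : y n ≤ u n := by
  rw [y, u, x]
  exact mul_le_mul_of_nonneg_left
    (exp_le_exp.2 (neg_le_neg (by linarith [add_one_le_exp (scale n)])))
    (by linarith [sixteen_le_scale n])

theorem u_lt_v (n : ℕ) : u n < v n := by
  rw [v]; nlinarith [u_pos n, sixteen_le_scale n]

theorem v_pos (n : ℕ) : 0 < v n := (u_pos n).trans (u_lt_v n)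

theorem u_le_one (n : ℕ) : u n ≤ 1 := by
  rw [u, exp_neg, ← div_eq_mul_inv, div_le_one (exp_pos _)]
  linarith [add_one_le_exp (scale n)]

theorem tendsto_v : Tendsto v atTop (𝓝 0) := by
  have h := ((tendsto_pow_mul_exp_neg_atTop_nhds_zero 2).comp tendsto_scale).div_const 2
  simp only [zero_div] at h
  refine h.congr fun n => ?_
  simp [v, u]; ring

theorem two_mul_exp_mul_x_succ_le (n : ℕ) : 2 * exp (3 * scale n) * x (n + 1) ≤ x n := by
  have hL := sixteen_le_scale n
  have h3L := sixteen_mul_le_exp_three_mul (L := scale n) (by linarith)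
  have hgap : exp (scale n) + 3 * scale n + 1 ≤ exp (4 * scale n) := by
    have h4 : exp (4 * scale n) = exp (scale n) * exp (3 * scale n) := by
      rw [← exp_add]; ring_nf
    nlinarith [one_le_exp (by linarith : 0 ≤ scale n)]
  have htwo : (2 : ℝ) ≤ exp 1 := by linarith [add_one_le_exp 1]
  calc 2 * exp (3 * scale n) * x (n + 1)
      ≤ exp 1 * exp (3 * scale n) * x (n + 1) :=
        mul_le_mul_of_nonneg_right (mul_le_mul_of_nonneg_right htwo (exp_pos _).le) (x_pos _).le
    _ = exp (1 + 3 * scale n - exp (4 * scale n)) := by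
        rw [x, scale_succ, sub_eq_add_neg, exp_add, exp_add]
    _ ≤ x n := exp_le_exp.2 (by linarith)

theorem y_succ_le (n : ℕ) : y (n + 1) ≤ x n / 2 := by
  have h3L := sixteen_mul_le_exp_three_mul (L := scale n) (by linarith [sixteen_le_scale n])
  rw [y, scale_succ]
  linarith [two_mul_exp_mul_x_succ_le n, mul_le_mul_of_nonneg_right h3L (x_pos (n + 1)).le,
    x_pos n]

theorem x_sub_y_succ_pos (n : ℕ) : 0 < x n - y (n + 1) := by
  linarith [y_succ_le n, x_pos n]

theorem sixteen_mul_scale_mul_exp_neg_le_one (n : ℕ) :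
    16 * scale n * exp (-(3 * scale n)) ≤ 1 := by
  rw [exp_neg, ← div_eq_mul_inv, div_le_one (exp_pos _)]
  exact sixteen_mul_le_exp_three_mul (by linarith [sixteen_le_scale n])

theorem v_succ_le (n : ℕ) : v (n + 1) ≤ u n / 2 := by
  have h := mul_le_mul_of_nonneg_left (sixteen_mul_scale_mul_exp_neg_le_one n) (u_pos n).le
  rw [u] at h
  rw [v, u, u, scale_succ, exp_neg_four_mul]
  linarith

theorem eight_mul_u_div_x_le (n : ℕ) : 8 * (u n / x n) ≤ u (n + 1) / x (n + 1) := by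
  have hinv : exp (3 * scale n) * exp (-(3 * scale n)) = 1 := by rw [← exp_add]; simp
  have h := mul_le_mul_of_nonneg_left (two_mul_exp_mul_x_succ_le n) (u_pos n).le
  rw [u] at h
  rw [u, u, scale_succ, exp_neg_four_mul, mul_div_assoc',
    div_le_div_iff₀ (x_pos n) (x_pos (n + 1))]
  linear_combination 4 * exp (-(3 * scale n)) * h - 8 * scale n * exp (-scale n) * x (n + 1) * hinv

theorem slope_x_y_le (n : ℕ) : (v n - u n) / (y n - x n) ≤ u n / x n / 2 := by
  rw [div_div, div_le_div_iff₀ (sub_pos.2 (x_lt_y n)) (by linarith [x_pos n]), v, y]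
  nlinarith [mul_pos (u_pos n) (x_pos n)]

theorem le_slope_x_y (n : ℕ) : u n / x n / 4 ≤ (v n - u n) / (y n - x n) := by
  rw [div_div, div_le_div_iff₀ (by linarith [x_pos n]) (sub_pos.2 (x_lt_y n)), v, y]
  nlinarith [mul_le_mul_of_nonneg_left (sixteen_le_scale n) (mul_pos (u_pos n) (x_pos n)).le,
    mul_pos (u_pos n) (x_pos n)]

theorem le_slope_y_x (n : ℕ) : u n / x n / 2 ≤ (u n - v (n + 1)) / (x n - y (n + 1)) := by
  rw [div_div, div_le_div_iff₀ (by linarith [x_pos n]) (x_sub_y_succ_pos n)]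
  nlinarith [mul_le_mul_of_nonneg_right (v_succ_le n) (x_pos n).le,
    mul_pos (u_pos n) (y_pos (n + 1))]

theorem slope_y_x_le (n : ℕ) : (u n - v (n + 1)) / (x n - y (n + 1)) ≤ 2 * (u n / x n) := by
  rw [mul_div_assoc', div_le_div_iff₀ (x_sub_y_succ_pos n) (x_pos n)]
  nlinarith [mul_le_mul_of_nonneg_left (y_succ_le n) (u_pos n).le,
    mul_pos (v_pos (n + 1)) (x_pos n)]

noncomputable def knot (m : ℕ) : ℝ := if Even m then y (m / 2) else x (m / 2)

noncomputable def knotValue (m : ℕ) : ℝ := if Even m then v (m / 2) else u (m / 2)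

@[simp] theorem knot_two_mul (n : ℕ) : knot (2 * n) = y n := by simp [knot]

@[simp] theorem knot_two_mul_add_one (n : ℕ) : knot (2 * n + 1) = x n := by
  simp [knot, show (2 * n + 1) / 2 = n by omega]

@[simp] theorem knotValue_two_mul (n : ℕ) : knotValue (2 * n) = v n := by simp [knotValue]

@[simp] theorem knotValue_two_mul_add_one (n : ℕ) : knotValue (2 * n + 1) = u n := by
  simp [knotValue, show (2 * n + 1) / 2 = n by omega]

theorem chordSlope_knot_two_mul_add_one (n : ℕ) :
    chordSlope knot knotValue (2 * n + 1) = (v n - u n) / (y n - x n) := by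
  simp [chordSlope]

theorem chordSlope_knot_two_mul_add_two (n : ℕ) :
    chordSlope knot knotValue (2 * n + 2) = (u n - v (n + 1)) / (x n - y (n + 1)) := by
  simp [chordSlope, show 2 * n + 2 = 2 * (n + 1) by ring]

theorem knot_strictAnti : StrictAnti knot := by
  refine strictAnti_nat_of_succ_lt fun m => ?_
  obtain ⟨n, rfl | rfl⟩ := Nat.even_or_odd' m
  · simpa using x_lt_y n
  · rw [show 2 * n + 1 + 1 = 2 * (n + 1) by ring, knot_two_mul, knot_two_mul_add_one]
    linarith [y_succ_le n, x_pos n]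

theorem knot_pos (m : ℕ) : 0 < knot m := by
  obtain ⟨n, rfl | rfl⟩ := Nat.even_or_odd' m
  · simpa using y_pos n
  · simpa using x_pos n

theorem knot_le_knotValue (m : ℕ) : knot m ≤ knotValue m := by
  obtain ⟨n, rfl | rfl⟩ := Nat.even_or_odd' m
  · simpa using (y_le_u n).trans (u_lt_v n).le
  · simpa using (x_lt_y n).le.trans (y_le_u n)

theorem knotValue_le_v (m : ℕ) : knotValue m ≤ v (m / 2) := by
  obtain ⟨n, rfl | rfl⟩ := Nat.even_or_odd' m
  · simp
  · simpa [show (2 * n + 1) / 2 = n by omega] using (u_lt_v n).le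

theorem tendsto_knotValue : Tendsto knotValue atTop (𝓝 0) :=
  squeeze_zero (fun m => (knot_pos m).le.trans (knot_le_knotValue m)) knotValue_le_v
    (tendsto_v.comp (Nat.tendsto_div_const_atTop two_ne_zero))

theorem tendsto_knot : Tendsto knot atTop (𝓝 0) :=
  squeeze_zero (fun m => (knot_pos m).le) knot_le_knotValue tendsto_knotValue

theorem monotone_chordSlope_knot : Monotone (chordSlope knot knotValue) := by
  refine monotone_nat_of_le_succ fun m => ?_
  rcases m with _ | m
  · rw [show 0 + 1 = 2 * 0 + 1 by rfl, chordSlope_knot_two_mul_add_one]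
    exact (div_nonneg (div_nonneg (u_pos 0).le (x_pos 0).le) zero_le_four).trans (le_slope_x_y 0)
  obtain ⟨n, rfl | rfl⟩ := Nat.even_or_odd' m
  · rw [chordSlope_knot_two_mul_add_one, chordSlope_knot_two_mul_add_two]
    exact (slope_x_y_le n).trans (le_slope_y_x n)
  · rw [show 2 * n + 1 + 1 = 2 * n + 2 by ring, chordSlope_knot_two_mul_add_two,
      show 2 * n + 2 + 1 = 2 * (n + 1) + 1 by ring, chordSlope_knot_two_mul_add_one]
    calc (u n - v (n + 1)) / (x n - y (n + 1)) ≤ 2 * (u n / x n) := slope_y_x_le n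
      _ ≤ u (n + 1) / x (n + 1) / 4 := by linarith [eight_mul_u_div_x_le n]
      _ ≤ _ := le_slope_x_y (n + 1)

theorem x_strictAnti : StrictAnti x :=
  fun _ _ h => exp_lt_exp.2 (neg_lt_neg (exp_lt_exp.2 (scale_strictMono h)))

theorem x_lt_one (n : ℕ) : x n < 1 := exp_lt_one_iff.2 (neg_neg_of_pos (exp_pos _))

theorem tendsto_x : Tendsto x atTop (𝓝 0) :=
  squeeze_zero (fun n => (x_pos n).le)
    (fun n => ((x_lt_y n).trans_le ((y_le_u n).trans (u_lt_v n).le)).le) tendsto_v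

theorem tendsto_x_nhdsGT : Tendsto x atTop (𝓝[>] 0) :=
  tendsto_nhdsWithin_of_tendsto_nhds_of_eventually_within _ tendsto_x
    (Eventually.of_forall x_pos)

theorem neg_log_x (n : ℕ) : -log (x n) = exp (scale n) := by rw [x, log_exp, neg_neg]

theorem x_mul_u_mul_neg_log_x (n : ℕ) : x n * u n * (-log (x n)) = y n := by
  have h : exp (-scale n) * exp (scale n) = 1 := by rw [← exp_add, neg_add_cancel, exp_zero]
  rw [neg_log_x, u, y]
  linear_combination x n * scale n * h

theorem v_div_u (n : ℕ) : v n / u n = scale n / 2 := by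
  rw [v, mul_div_assoc, div_self (u_pos n).ne', mul_one]

theorem half_log_neg_log_x (n : ℕ) : 1 / 2 * log (-log (x n)) = scale n / 2 := by
  rw [neg_log_x, log_exp]; ring

end LossModulus

open LossModulus

theorem loss_modulus_construction_general :
    ∃ G : ℝ → ℝ,
      ContinuousOn G (Set.Icc 0 1) ∧
      MonotoneOn G (Set.Icc 0 1) ∧
      ConcaveOn ℝ (Set.Icc 0 1) G ∧
      G 0 = 0 ∧
      (∀ x ∈ Set.Ioc (0:ℝ) 1, 0 < G x) ∧
      (∃ x : ℕ → ℝ,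
        StrictAnti x ∧
        (∀ n, x n ∈ Set.Ioo (0:ℝ) 1) ∧
        Filter.Tendsto x Filter.atTop (nhds 0) ∧
        (∀ n, x n * G (x n) * (-Real.log (x n)) ∈ Set.Ioc (0:ℝ) 1) ∧
        (∀ n, (1/2) * Real.log (-Real.log (x n)) ≤
            G (x n * G (x n) * (-Real.log (x n))) / G (x n))) ∧
      (∀ M : ℝ, ∃ᶠ x in nhdsWithin 0 (Set.Ioi 0),
        M ≤ G (x * G x * (-Real.log x)) / G x) := by
  obtain ⟨G, hGcont, hGmono, hGconc, hG0, hGknot⟩ := exists_concaveOn_interpolant knot_strictAnti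
    tendsto_knot tendsto_knotValue monotone_chordSlope_knot
  have hGx n : G (x n) = u n := by simpa using hGknot (2 * n + 1)
  have hGy n : G (y n) = v n := by simpa using hGknot (2 * n)
  have harg n : x n * G (x n) * (-log (x n)) = y n := by rw [hGx, x_mul_u_mul_neg_log_x]
  have hratio n : G (x n * G (x n) * (-log (x n))) / G (x n) = scale n / 2 := by
    rw [harg, hGx, hGy, v_div_u]
  refine ⟨G, hGcont.mono Icc_subset_Ici_self, hGmono.mono Icc_subset_Ici_self,
    hGconc.subset Icc_subset_Ici_self (convex_Icc 0 1), hG0, fun t ht => ?_,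
    ⟨x, x_strictAnti, fun n => ⟨x_pos n, x_lt_one n⟩, tendsto_x,
      fun n => harg n ▸ ⟨y_pos n, (y_le_u n).trans (u_le_one n)⟩,
      fun n => by rw [hratio, half_log_neg_log_x]⟩, fun M => ?_⟩
  · obtain ⟨n, hn⟩ := (tendsto_x.eventually (gt_mem_nhds ht.1)).exists
    exact (hGx n ▸ u_pos n).trans_le (hGmono (x_pos n).le ht.1.le hn.le)
  · refine tendsto_x_nhdsGT.frequently (Eventually.frequently ?_)
    filter_upwards [(tendsto_scale.atTop_div_const two_pos).eventually_ge_atTop M] with n hn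
    rwa [hratio]

/-- Proposition 4.1: there is a continuous, monotone, concave modulus `G` on `[0,1]`,
vanishing at `0` and positive on `(0,1]`, and a strictly decreasing sequence `xₙ → 0`
along which `G(xₙ · G(xₙ) · (−log xₙ)) / G(xₙ) ≥ (1/2)·log(−log xₙ)`; in particular
`limsup_{x→0⁺} G(x·G(x)·(−log x))/G(x) = ∞` (expressed via frequently). -/
theorem loss_modulus_construction (γ : ℝ) (hγ0 : 0 < γ) (hγ1 : γ < 1) :
    ∃ G : ℝ → ℝ,
      ContinuousOn G (Set.Icc 0 1) ∧
      MonotoneOn G (Set.Icc 0 1) ∧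
      ConcaveOn ℝ (Set.Icc 0 1) G ∧
      G 0 = 0 ∧
      (∀ x ∈ Set.Ioc (0:ℝ) 1, 0 < G x) ∧
      (∃ x : ℕ → ℝ,
        StrictAnti x ∧
        (∀ n, x n ∈ Set.Ioo (0:ℝ) 1) ∧
        Filter.Tendsto x Filter.atTop (nhds 0) ∧
        (∀ n, x n * G (x n) * (-Real.log (x n)) ∈ Set.Ioc (0:ℝ) 1) ∧
        (∀ n, (1/2) * Real.log (-Real.log (x n)) ≤
            G (x n * G (x n) * (-Real.log (x n))) / G (x n))) ∧
      (∀ M : ℝ, ∃ᶠ x in nhdsWithin 0 (Set.Ioi 0),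
        M ≤ G (x * G x * (-Real.log x)) / G x) :=
  loss_modulus_construction_general
end

section
/- For every γ ∈ (0,1) there exist x₀ ∈ (0,1) and a function G : [0,1] → ℝ which is continuous, monotone increasing and concave on [0,1], with G(0) = 0, which in addition satisfies G(x) ≤ (−log x)^{−γ}·log(−log x) for all x ∈ (0, x₀], and for which there is a strictly decreasing sequence (x_n) in (0, x₀] converging to 0 with x_n·G(x_n)·(−log x_n) ∈ (0,1] and G(x_n·G(x_n)·(−log x_n)) / G(x_n) ≥ (1/2)·log(−log x_n) for every n. -/
open Real Filter Set

namespace LossModulus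

structure Good (γ T : ℝ) : Prop where
  hγ0 : 0 < γ
  hγ1 : γ < 1
  hT : Real.exp 4 ≤ T
  hP2 : ∀ t, T ≤ t → 2 * (Real.log t)^2 ≤ t ^ (1 - γ)
  hP3 : ∀ t, T ≤ t → Real.log t ≤ γ * t

lemma good_exists {γ : ℝ} (hγ0 : 0 < γ) (hγ1 : γ < 1) : ∃ T, Good γ T := by
  have h2 : ∀ᶠ t in atTop, 2 * (Real.log t)^2 ≤ t ^ (1 - γ) := by
    have h := isLittleO_log_rpow_rpow_atTop (2:ℝ) (s := 1 - γ) (by linarith)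
    have := h.def (c := (1/2 : ℝ)) (by norm_num)
    filter_upwards [this, eventually_ge_atTop (1:ℝ)] with t ht ht1
    have hlog : 0 ≤ Real.log t := Real.log_nonneg ht1
    have hrp : 0 ≤ t ^ (1-γ) := Real.rpow_nonneg (by linarith) _
    rw [Real.norm_eq_abs, Real.norm_eq_abs, abs_of_nonneg (Real.rpow_nonneg hlog _),
      abs_of_nonneg hrp] at ht
    have : Real.log t ^ (2:ℝ) = (Real.log t)^2 := by
      rw [show ((2:ℝ) = ((2:ℕ):ℝ)) by norm_num, Real.rpow_natCast]
    rw [this] at ht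
    linarith
  have h3 : ∀ᶠ t in atTop, Real.log t ≤ γ * t := by
    have := Real.isLittleO_log_id_atTop.def hγ0
    filter_upwards [this, eventually_ge_atTop (0:ℝ)] with t ht ht0
    rw [Real.norm_eq_abs, Real.norm_eq_abs, id] at ht
    calc Real.log t ≤ |Real.log t| := le_abs_self _
    _ ≤ γ * |t| := ht
    _ = γ * t := by rw [abs_of_nonneg ht0]
  obtain ⟨T₁, hT₁⟩ := (h2.and h3).exists_forall_of_atTop
  refine ⟨max T₁ (Real.exp 4), ⟨hγ0, hγ1, le_max_right _ _, ?_, ?_⟩⟩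
  · intro t ht
    exact (hT₁ t (le_trans (le_max_left _ _) ht)).1
  · intro t ht
    exact (hT₁ t (le_trans (le_max_left _ _) ht)).2

noncomputable def tt (γ T : ℝ) : ℕ → ℝ
  | 0 => T
  | n+1 => tt γ T n * Real.log (tt γ T n) ^ (1/γ : ℝ)

variable {γ T : ℝ}

lemma exp4_le_tt (h : Good γ T) : ∀ n, Real.exp 4 ≤ tt γ T n := by
  intro n
  induction n with
  | zero => exact h.hT
  | succ n ih =>
    have hpos : 0 < tt γ T n := lt_of_lt_of_le (Real.exp_pos 4) ih
    have hlog : (4:ℝ) ≤ Real.log (tt γ T n) := by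
      rw [show (4:ℝ) = Real.log (Real.exp 4) by rw [Real.log_exp]]
      exact Real.log_le_log (Real.exp_pos 4) ih
    have h1 : (1:ℝ) ≤ Real.log (tt γ T n) ^ (1/γ : ℝ) :=
      Real.one_le_rpow (by linarith) (by have := h.hγ0; positivity)
    calc Real.exp 4 ≤ tt γ T n := ih
    _ = tt γ T n * 1 := by ring
    _ ≤ tt γ T n * Real.log (tt γ T n) ^ (1/γ : ℝ) :=
        mul_le_mul_of_nonneg_left h1 hpos.le
    _ = tt γ T (n+1) := rfl

lemma tt_pos (h : Good γ T) (n : ℕ) : 0 < tt γ T n :=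
  lt_of_lt_of_le (Real.exp_pos 4) (exp4_le_tt h n)

lemma T_le_tt (h : Good γ T) (n : ℕ) : T ≤ tt γ T n := by
  induction n with
  | zero => exact le_refl _
  | succ n ih =>
    have hpos : 0 < tt γ T n := tt_pos h n
    have hlog : (4:ℝ) ≤ Real.log (tt γ T n) := by
      rw [show (4:ℝ) = Real.log (Real.exp 4) by rw [Real.log_exp]]
      exact Real.log_le_log (Real.exp_pos 4) (exp4_le_tt h n)
    have h1 : (1:ℝ) ≤ Real.log (tt γ T n) ^ (1/γ : ℝ) :=
      Real.one_le_rpow (by linarith) (by have := h.hγ0; positivity)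
    calc T ≤ tt γ T n := ih
    _ = tt γ T n * 1 := by ring
    _ ≤ tt γ T (n+1) := mul_le_mul_of_nonneg_left h1 hpos.le

lemma log_tt_ge4 (h : Good γ T) (n : ℕ) : (4:ℝ) ≤ Real.log (tt γ T n) := by
  rw [show (4:ℝ) = Real.log (Real.exp 4) by rw [Real.log_exp]]
  exact Real.log_le_log (Real.exp_pos 4) (exp4_le_tt h n)

lemma log_rpow_ge (h : Good γ T) (n : ℕ) :
    Real.log (tt γ T n) ≤ Real.log (tt γ T n) ^ (1/γ : ℝ) := by
  have hlog := log_tt_ge4 h n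
  calc Real.log (tt γ T n) = Real.log (tt γ T n) ^ (1:ℝ) := (Real.rpow_one _).symm
  _ ≤ Real.log (tt γ T n) ^ (1/γ : ℝ) := by
      apply Real.rpow_le_rpow_of_exponent_le (by linarith)
      rw [le_div_iff₀ h.hγ0]
      nlinarith [h.hγ0, h.hγ1]

lemma four_tt_le (h : Good γ T) (n : ℕ) : 4 * tt γ T n ≤ tt γ T (n+1) := by
  have hpos : 0 < tt γ T n := tt_pos h n
  have : (4:ℝ) ≤ Real.log (tt γ T n) ^ (1/γ : ℝ) :=
    le_trans (log_tt_ge4 h n) (log_rpow_ge h n)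
  calc 4 * tt γ T n ≤ Real.log (tt γ T n) ^ (1/γ : ℝ) * tt γ T n :=
        mul_le_mul_of_nonneg_right this hpos.le
  _ = tt γ T (n+1) := by rw [mul_comm]; rfl

lemma tt_lt_succ (h : Good γ T) (n : ℕ) : tt γ T n < tt γ T (n+1) :=
  lt_of_lt_of_le (by nlinarith [tt_pos h n]) (four_tt_le h n)

lemma tt_strictMono (h : Good γ T) : StrictMono (tt γ T) :=
  strictMono_nat_of_lt_succ (tt_lt_succ h)

lemma tt_tendsto (h : Good γ T) : Tendsto (tt γ T) atTop atTop := by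
  apply tendsto_atTop_mono _ tendsto_natCast_atTop_atTop
  intro n
  induction n with
  | zero =>
    simp only [Nat.cast_zero]
    exact le_trans (Real.exp_pos 4).le (le_trans h.hT (T_le_tt h 0))
  | succ n ih =>
    have := four_tt_le h n
    have h1 : (1:ℝ) ≤ tt γ T n := by nlinarith [tt_pos h n, exp4_le_tt h n, Real.add_one_le_exp (4:ℝ), Real.exp_pos 4]
    push_cast
    nlinarith [tt_pos h n]


noncomputable def xx (γ T : ℝ) (n : ℕ) : ℝ := Real.exp (-(tt γ T n))
noncomputable def gg (γ T : ℝ) (n : ℕ) : ℝ := tt γ T (n+1) ^ (-γ : ℝ)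
noncomputable def hh (γ T : ℝ) (n : ℕ) : ℝ := tt γ T n ^ (-γ : ℝ) / 2
noncomputable def yy (γ T : ℝ) (n : ℕ) : ℝ := xx γ T n * gg γ T n * tt γ T n

lemma xx_pos (n : ℕ) : 0 < xx γ T n := Real.exp_pos _

lemma xx_lt_one (h : Good γ T) (n : ℕ) : xx γ T n < 1 := by
  have := tt_pos h n
  exact Real.exp_lt_one_iff.mpr (by linarith)

lemma gg_pos (h : Good γ T) (n : ℕ) : 0 < gg γ T n :=
  Real.rpow_pos_of_pos (tt_pos h (n+1)) _

lemma hh_pos (h : Good γ T) (n : ℕ) : 0 < hh γ T n := by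
  have := Real.rpow_pos_of_pos (tt_pos h n) (-γ)
  unfold hh; linarith

lemma gg_eq (h : Good γ T) (n : ℕ) :
    gg γ T n = tt γ T n ^ (-γ : ℝ) / Real.log (tt γ T n) := by
  have hpos := tt_pos h n
  have hlog := log_tt_ge4 h n
  have hγ := h.hγ0
  unfold gg
  show (tt γ T n * Real.log (tt γ T n) ^ (1/γ : ℝ)) ^ (-γ : ℝ) = _
  rw [Real.mul_rpow hpos.le (by positivity),
    ← Real.rpow_mul (by linarith : (0:ℝ) ≤ Real.log (tt γ T n))]
  have : (1/γ) * (-γ) = (-1 : ℝ) := by field_simp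
  rw [this, Real.rpow_neg_one, div_eq_mul_inv]

lemma gg_mul_log (h : Good γ T) (n : ℕ) :
    gg γ T n * Real.log (tt γ T n) = 2 * hh γ T n := by
  have hlog := log_tt_ge4 h n
  rw [gg_eq h n]
  unfold hh
  field_simp

lemma two_gg_le_hh (h : Good γ T) (n : ℕ) : 2 * gg γ T n ≤ hh γ T n := by
  have hlog := log_tt_ge4 h n
  have hrp : 0 < tt γ T n ^ (-γ : ℝ) := Real.rpow_pos_of_pos (tt_pos h n) _
  rw [gg_eq h n]
  unfold hh
  have key : 2 * (tt γ T n ^ (-γ:ℝ) / Real.log (tt γ T n))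
      = (2 * tt γ T n ^ (-γ:ℝ)) / Real.log (tt γ T n) := by ring
  rw [key, div_le_div_iff₀ (by linarith) (by norm_num)]
  nlinarith

lemma hh_succ (n : ℕ) : hh γ T (n+1) = gg γ T n / 2 := rfl

lemma rpow_split (h : Good γ T) (n : ℕ) :
    tt γ T n ^ (-γ : ℝ) * tt γ T n = tt γ T n ^ (1 - γ : ℝ) := by
  have hpos := tt_pos h n
  nth_rewrite 2 [← Real.rpow_one (tt γ T n)]
  rw [← Real.rpow_add hpos, show (-γ + 1 : ℝ) = 1 - γ from by ring]

lemma ggt_ge (h : Good γ T) (n : ℕ) :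
    1 + Real.log (tt γ T n) ≤ gg γ T n * tt γ T n := by
  have hpos := tt_pos h n
  have hlog := log_tt_ge4 h n
  have hP2 := h.hP2 _ (T_le_tt h n)
  have hL : Real.log (tt γ T n) ≠ 0 := by linarith
  have hid : gg γ T n * tt γ T n * Real.log (tt γ T n) = tt γ T n ^ (1 - γ : ℝ) := by
    rw [gg_eq h n, ← rpow_split h n]
    field_simp
  nlinarith [sq_nonneg (Real.log (tt γ T n))]

lemma ggt_ge5 (h : Good γ T) (n : ℕ) : 5 ≤ gg γ T n * tt γ T n := by
  have := ggt_ge h n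
  have := log_tt_ge4 h n
  linarith

lemma xx_lt_yy (h : Good γ T) (n : ℕ) : xx γ T n < yy γ T n := by
  have h5 := ggt_ge5 h n
  have hx := xx_pos (γ := γ) (T := T) n
  unfold yy
  nlinarith

lemma yy_sub_xx (h : Good γ T) (n : ℕ) :
    4 * xx γ T n ≤ yy γ T n - xx γ T n := by
  have h5 := ggt_ge5 h n
  have hx := xx_pos (γ := γ) (T := T) n
  unfold yy
  nlinarith

lemma yy_lt_one (h : Good γ T) (n : ℕ) : yy γ T n < 1 := by
  have hpos := tt_pos h n
  have hlog := log_tt_ge4 h n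
  have hgg : gg γ T n ≤ 1 := by
    rw [gg_eq h n]
    have hrp : tt γ T n ^ (-γ : ℝ) ≤ 1 :=
      Real.rpow_le_one_of_one_le_of_nonpos
        (by nlinarith [Real.add_one_le_exp (4:ℝ), exp4_le_tt h n]) (by linarith [h.hγ0])
    calc tt γ T n ^ (-γ:ℝ) / Real.log (tt γ T n) ≤ 1 / 1 := by
          apply div_le_div₀ (by norm_num) (by linarith) (by norm_num) (by linarith)
    _ = 1 := by norm_num
  have hxt : xx γ T n * tt γ T n < 1 := by
    unfold xx
    have h1 : tt γ T n + 1 ≤ Real.exp (tt γ T n) := Real.add_one_le_exp _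
    rw [Real.exp_neg, inv_mul_lt_iff₀ (Real.exp_pos _), mul_one]
    linarith
  have hx := xx_pos (γ := γ) (T := T) n
  calc yy γ T n = xx γ T n * tt γ T n * gg γ T n := by unfold yy; ring
  _ ≤ xx γ T n * tt γ T n * 1 := by
      apply mul_le_mul_of_nonneg_left hgg; positivity
  _ < 1 := by rw [mul_one]; exact hxt

lemma yy_succ_le (h : Good γ T) (n : ℕ) : 4 * yy γ T (n+1) ≤ xx γ T n := by
  set t := tt γ T n with ht
  set t' := tt γ T (n+1) with ht'
  have hpos : 0 < t := tt_pos h n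
  have hpos' : 0 < t' := tt_pos h (n+1)
  have hlog := log_tt_ge4 h n
  have hlog' := log_tt_ge4 h (n+1)
  have hP3 := h.hP3 _ (T_le_tt h n)
  have hγ := h.hγ0
  -- u = (log t)^{1/γ} ≤ exp t
  have hu2 : Real.log t ^ (1/γ : ℝ) ≤ Real.exp t := by
    rw [Real.rpow_def_of_pos (by linarith)]
    apply Real.exp_le_exp.mpr
    have hloglog : Real.log (Real.log t) ≤ Real.log t := by
      calc Real.log (Real.log t) ≤ Real.log t - 1 :=
            Real.log_le_sub_one_of_pos (by linarith)
      _ ≤ Real.log t := by linarith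
    calc Real.log (Real.log t) * (1/γ) ≤ Real.log t * (1/γ) := by
          apply mul_le_mul_of_nonneg_right hloglog; positivity
    _ ≤ t := by
        rw [mul_one_div, div_le_iff₀ hγ]
        linarith [mul_comm γ t]
  have htt' : t' = t * Real.log t ^ (1/γ : ℝ) := rfl
  have hu1 : Real.log t ≤ Real.log t ^ (1/γ : ℝ) := log_rpow_ge h n
  have ht'le : t' ≤ t * Real.exp t := by
    rw [htt']; exact mul_le_mul_of_nonneg_left hu2 hpos.le
  have ht'ge : 3 * t ≤ t' - t := by
    rw [htt']
    nlinarith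
  have hexp : 4 * t' ≤ Real.exp (t' - t) := by
    have h1 : Real.exp (3 * t) ≤ Real.exp (t' - t) := Real.exp_le_exp.mpr ht'ge
    have h2 : 4 * t ≤ Real.exp t * Real.exp t := by
      nlinarith [Real.add_one_le_exp t, Real.exp_pos t]
    have h3 : Real.exp (3*t) = Real.exp t * Real.exp t * Real.exp t := by
      rw [← Real.exp_add, ← Real.exp_add]; ring_nf
    nlinarith [Real.exp_pos t, Real.exp_pos (t'-t)]
  have hgg1 : gg γ T (n+1) ≤ 1 := by
    rw [gg_eq h (n+1)]
    have h1t' : (1:ℝ) ≤ t' := by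
      nlinarith [exp4_le_tt h (n+1), Real.add_one_le_exp (4:ℝ)]
    have hrp : t' ^ (-γ : ℝ) ≤ 1 :=
      Real.rpow_le_one_of_one_le_of_nonpos h1t' (by linarith)
    calc t' ^ (-γ:ℝ) / Real.log t' ≤ 1 / 1 :=
          div_le_div₀ (by norm_num) hrp (by norm_num) (by linarith)
    _ = 1 := by norm_num
  have hyle : yy γ T (n+1) ≤ Real.exp (-t') * t' := by
    unfold yy
    calc xx γ T (n+1) * gg γ T (n+1) * tt γ T (n+1)
        = Real.exp (-t') * t' * gg γ T (n+1) := by unfold xx; ring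
    _ ≤ Real.exp (-t') * t' * 1 := by
        apply mul_le_mul_of_nonneg_left hgg1; positivity
    _ = Real.exp (-t') * t' := by ring
  calc 4 * yy γ T (n+1) ≤ 4 * (Real.exp (-t') * t') := by linarith
  _ ≤ xx γ T n := by
      unfold xx
      rw [Real.exp_neg, Real.exp_neg]
      rw [Real.exp_sub] at hexp
      have e1 := Real.exp_pos t
      have e2 := Real.exp_pos t'
      have step : 4 * t' * (Real.exp t')⁻¹ ≤ Real.exp t' / Real.exp t * (Real.exp t')⁻¹ :=
        mul_le_mul_of_nonneg_right hexp (inv_nonneg.mpr e2.le)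
      have heq : Real.exp t' / Real.exp t * (Real.exp t')⁻¹ = (Real.exp t)⁻¹ := by
        field_simp
      have hre : 4 * ((Real.exp t')⁻¹ * t') = 4 * t' * (Real.exp t')⁻¹ := by ring
      rw [hre]
      rw [heq] at step
      exact step


lemma yy_pos (h : Good γ T) (n : ℕ) : 0 < yy γ T n := by
  have := xx_pos (γ := γ) (T := T) n; have := gg_pos h n; have := tt_pos h n
  unfold yy; positivity

noncomputable def P (γ T : ℝ) (j : ℕ) : ℝ :=
  if Even j then yy γ T (j/2) else xx γ T (j/2)
noncomputable def V (γ T : ℝ) (j : ℕ) : ℝ :=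
  if Even j then hh γ T (j/2) else gg γ T (j/2)
noncomputable def M (γ T : ℝ) : ℕ → ℝ
  | 0 => 0
  | (j+1) => (V γ T j - V γ T (j+1)) / (P γ T j - P γ T (j+1))
noncomputable def L (γ T : ℝ) (j : ℕ) (z : ℝ) : ℝ := V γ T j + M γ T j * (z - P γ T j)
noncomputable def G (γ T : ℝ) (z : ℝ) : ℝ := ⨅ j, L γ T j z

lemma P_even (k : ℕ) : P γ T (2*k) = yy γ T k := by
  have h2 : (2*k)/2 = k := by omega
  simp [P, h2]
lemma P_odd (k : ℕ) : P γ T (2*k+1) = xx γ T k := by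
  have h2 : (2*k+1)/2 = k := by omega
  have he : ¬ Even (2*k+1) := by simp [Nat.even_add_one]
  simp [P, h2, he]
lemma V_even (k : ℕ) : V γ T (2*k) = hh γ T k := by
  have h2 : (2*k)/2 = k := by omega
  simp [V, h2]
lemma V_odd (k : ℕ) : V γ T (2*k+1) = gg γ T k := by
  have h2 : (2*k+1)/2 = k := by omega
  have he : ¬ Even (2*k+1) := by simp [Nat.even_add_one]
  simp [V, h2, he]

lemma P_succ_lt (h : Good γ T) (j : ℕ) : P γ T (j+1) < P γ T j := by
  rcases Nat.even_or_odd j with ⟨k, hk⟩ | ⟨k, hk⟩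
  · subst hk
    rw [show k+k = 2*k from by ring, P_even, P_odd]
    exact xx_lt_yy h k
  · subst hk
    rw [show 2*k+1+1 = 2*(k+1) from by ring, P_even, P_odd]
    have := yy_succ_le h k
    have := yy_pos h (k+1)
    linarith
lemma P_pos (h : Good γ T) (j : ℕ) : 0 < P γ T j := by
  rcases Nat.even_or_odd j with ⟨k, hk⟩ | ⟨k, hk⟩ <;> subst hk
  · rw [show k+k = 2*k from by ring, P_even]; exact yy_pos h k
  · rw [P_odd]; exact xx_pos k
lemma V_succ_lt (h : Good γ T) (j : ℕ) : V γ T (j+1) < V γ T j := by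
  rcases Nat.even_or_odd j with ⟨k, hk⟩ | ⟨k, hk⟩
  · subst hk
    rw [show k+k = 2*k from by ring, V_even, V_odd]
    have := two_gg_le_hh h k
    have := gg_pos h k
    linarith
  · subst hk
    rw [show 2*k+1+1 = 2*(k+1) from by ring, V_even, V_odd, hh_succ]
    have := gg_pos h k
    linarith
lemma V_pos (h : Good γ T) (j : ℕ) : 0 < V γ T j := by
  rcases Nat.even_or_odd j with ⟨k, hk⟩ | ⟨k, hk⟩ <;> subst hk
  · rw [show k+k = 2*k from by ring, V_even]; exact hh_pos h k
  · rw [V_odd]; exact gg_pos h k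

lemma M_succ_pos (h : Good γ T) (j : ℕ) : 0 < M γ T (j+1) := by
  show 0 < (V γ T j - V γ T (j+1)) / (P γ T j - P γ T (j+1))
  apply div_pos <;> [skip; skip] <;>
    [linarith [V_succ_lt h j]; linarith [P_succ_lt h j]]
lemma M_nonneg (h : Good γ T) (j : ℕ) : 0 ≤ M γ T j := by
  cases j with
  | zero => exact le_refl 0
  | succ j => exact (M_succ_pos h j).le

lemma M_odd (k : ℕ) :
    M γ T (2*k+1) = (hh γ T k - gg γ T k) / (yy γ T k - xx γ T k) := by
  show (V γ T (2*k) - V γ T (2*k+1)) / (P γ T (2*k) - P γ T (2*k+1)) = _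
  rw [V_even, V_odd, P_even, P_odd]
lemma M_even (k : ℕ) :
    M γ T (2*k+2) = (gg γ T k - hh γ T (k+1)) / (xx γ T k - yy γ T (k+1)) := by
  show (V γ T (2*k+1) - V γ T (2*k+2)) / (P γ T (2*k+1) - P γ T (2*k+2)) = _
  rw [show 2*k+2 = 2*(k+1) from by ring, V_odd, V_even, P_odd, P_even]

lemma slope_case1 (h : Good γ T) (k : ℕ) : M γ T (2*k+1) ≤ M γ T (2*k+2) := by
  rw [M_odd, M_even, hh_succ]
  have hxk := xx_pos (γ := γ) (T := T) k
  have hg := gg_pos h k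
  have hhk := hh_pos h k
  have hyk1 := yy_pos h (k+1)
  have hgap := yy_succ_le h k
  have hD : Real.log (tt γ T k) ≤ gg γ T k * tt γ T k - 1 := by linarith [ggt_ge h k]
  have hD4 : (4:ℝ) ≤ gg γ T k * tt γ T k - 1 := by linarith [ggt_ge5 h k]
  have hyx : yy γ T k - xx γ T k = xx γ T k * (gg γ T k * tt γ T k - 1) := by
    unfold yy; ring
  have hml := gg_mul_log h k
  have h1 : hh γ T k ≤ (gg γ T k / 2) * (gg γ T k * tt γ T k - 1) := by nlinarith
  rw [div_le_div_iff₀ (by nlinarith) (by linarith)]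
  nlinarith [mul_pos hxk (mul_pos hg (tt_pos h k))]

lemma slope_case2 (h : Good γ T) (k : ℕ) : M γ T (2*k+2) ≤ M γ T (2*k+3) := by
  rw [M_even, show 2*k+3 = 2*(k+1)+1 from by ring, M_odd, hh_succ]
  have hxk := xx_pos (γ := γ) (T := T) k
  have hxk1 := xx_pos (γ := γ) (T := T) (k+1)
  have hg := gg_pos h k
  have hg1 := gg_pos h (k+1)
  have hh1 : hh γ T (k+1) = gg γ T k / 2 := hh_succ k
  have hyk1 := yy_pos h (k+1)
  have hgap := yy_succ_le h k
  have hnum : 2 * gg γ T (k+1) ≤ hh γ T (k+1) := two_gg_le_hh h (k+1)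
  have hyx1 : xx γ T (k+1) < yy γ T (k+1) := xx_lt_yy h (k+1)
  rw [div_le_div_iff₀ (by linarith) (by linarith)]
  rw [hh1] at hnum
  nlinarith

lemma M_mono (h : Good γ T) (j : ℕ) : M γ T j ≤ M γ T (j+1) := by
  cases j with
  | zero => exact (M_succ_pos h 0).le
  | succ j =>
    rcases Nat.even_or_odd j with ⟨k, hk⟩ | ⟨k, hk⟩
    · subst hk
      rw [show k+k = 2*k from by ring]
      exact slope_case1 h k
    · subst hk
      exact slope_case2 h k

lemma MP_le_V (h : Good γ T) (j : ℕ) : M γ T j * P γ T j ≤ V γ T j := by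
  cases j with
  | zero =>
    show (0:ℝ) * P γ T 0 ≤ V γ T 0
    rw [zero_mul]
    exact (V_pos h 0).le
  | succ j =>
    rcases Nat.even_or_odd j with ⟨k, hk⟩ | ⟨k, hk⟩
    · subst hk
      rw [show k+k = 2*k from by ring, M_odd, P_odd, V_odd]
      have hxk := xx_pos (γ := γ) (T := T) k
      have hg := gg_pos h k
      have hhk := hh_pos h k
      have hD : Real.log (tt γ T k) ≤ gg γ T k * tt γ T k - 1 := by linarith [ggt_ge h k]
      have hD4 : (4:ℝ) ≤ gg γ T k * tt γ T k - 1 := by linarith [ggt_ge5 h k]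
      have hyx : yy γ T k - xx γ T k = xx γ T k * (gg γ T k * tt γ T k - 1) := by
        unfold yy; ring
      have hml := gg_mul_log h k
      rw [div_mul_eq_mul_div, div_le_iff₀ (by nlinarith)]
      have h2 : 2 * hh γ T k ≤ gg γ T k * (gg γ T k * tt γ T k - 1) := by
        nlinarith [mul_le_mul_of_nonneg_left hD hg.le]
      rw [hyx]
      nlinarith [mul_le_mul_of_nonneg_right h2 hxk.le, mul_pos hhk hxk, mul_pos hg hxk]
    · subst hk
      rw [show 2*k+1+1 = 2*k+2 from rfl, M_even,
        show 2*k+2 = 2*(k+1) from by ring, P_even, V_even, hh_succ]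
      have hyk1 := yy_pos h (k+1)
      have hg := gg_pos h k
      have hgap := yy_succ_le h k
      rw [div_mul_eq_mul_div, div_le_iff₀ (by linarith)]
      nlinarith


lemma L_succ_eq (h : Good γ T) (j : ℕ) (z : ℝ) :
    L γ T (j+1) z = V γ T j + M γ T (j+1) * (z - P γ T j) := by
  have hne : P γ T j - P γ T (j+1) ≠ 0 := by linarith [P_succ_lt h j]
  have hM : M γ T (j+1) = (V γ T j - V γ T (j+1)) / (P γ T j - P γ T (j+1)) := rfl
  unfold L
  rw [hM]
  field_simp
  ring

lemma L_step_up (h : Good γ T) (j : ℕ) {z : ℝ} (hz : P γ T j ≤ z) :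
    L γ T j z ≤ L γ T (j+1) z := by
  rw [L_succ_eq h j z]
  show V γ T j + M γ T j * (z - P γ T j) ≤ _
  have := M_mono h j
  nlinarith

lemma L_step_down (h : Good γ T) (j : ℕ) {z : ℝ} (hz : z ≤ P γ T j) :
    L γ T (j+1) z ≤ L γ T j z := by
  rw [L_succ_eq h j z]
  show _ ≤ V γ T j + M γ T j * (z - P γ T j)
  have := M_mono h j
  nlinarith

lemma P_anti (h : Good γ T) : StrictAnti (P γ T) :=
  strictAnti_nat_of_succ_lt (P_succ_lt h)

lemma L_up (h : Good γ T) (j : ℕ) {z : ℝ} (hz : P γ T j ≤ z) :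
    ∀ k, j ≤ k → L γ T j z ≤ L γ T k z := by
  intro k hk
  induction k with
  | zero =>
    have : j = 0 := Nat.le_zero.mp hk
    subst this; exact le_refl _
  | succ k ih =>
    rcases Nat.eq_or_lt_of_le hk with he | hlt
    · subst he; exact le_refl _
    · have hjk : j ≤ k := Nat.lt_succ_iff.mp hlt
      have hPk : P γ T k ≤ z := le_trans ((P_anti h).antitone hjk) hz
      exact le_trans (ih hjk) (L_step_up h k hPk)

lemma L_down (h : Good γ T) :
    ∀ j, ∀ z, z ≤ P γ T j → ∀ k, k ≤ j+1 → L γ T (j+1) z ≤ L γ T k z := by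
  intro j
  induction j with
  | zero =>
    intro z hz k hk
    interval_cases k
    · exact L_step_down h 0 hz
    · exact le_refl _
  | succ j ih =>
    intro z hz k hk
    have h1 : L γ T (j+2) z ≤ L γ T (j+1) z := L_step_down h (j+1) hz
    rcases Nat.eq_or_lt_of_le hk with he | hlt
    · subst he; exact le_refl _
    · have hk' : k ≤ j+1 := Nat.lt_succ_iff.mp hlt
      have hz' : z ≤ P γ T j := le_trans hz (P_anti h (Nat.lt_succ_self j)).le
      exact le_trans h1 (ih z hz' k hk')


lemma L_nonneg (h : Good γ T) (j : ℕ) {z : ℝ} (hz : 0 ≤ z) : 0 ≤ L γ T j z := by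
  have h1 := MP_le_V h j
  have h2 := M_nonneg h j
  have h3 : 0 ≤ M γ T j * z := mul_nonneg h2 hz
  show 0 ≤ V γ T j + M γ T j * (z - P γ T j)
  nlinarith

lemma bddBelowL (h : Good γ T) {z : ℝ} (hz : 0 ≤ z) :
    BddBelow (Set.range fun j => L γ T j z) := by
  refine ⟨0, ?_⟩
  rintro w ⟨j, rfl⟩
  exact L_nonneg h j hz

lemma G_le_L (h : Good γ T) {z : ℝ} (hz : 0 ≤ z) (j : ℕ) : G γ T z ≤ L γ T j z :=
  ciInf_le (bddBelowL h hz) j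

lemma G_nonneg (h : Good γ T) {z : ℝ} (hz : 0 ≤ z) : 0 ≤ G γ T z :=
  le_ciInf fun j => L_nonneg h j hz

lemma G_piece (h : Good γ T) (j : ℕ) {z : ℝ}
    (hz1 : P γ T (j+1) ≤ z) (hz2 : z ≤ P γ T j) : G γ T z = L γ T (j+1) z := by
  have hz0 : 0 ≤ z := le_trans (P_pos h (j+1)).le hz1
  refine le_antisymm (G_le_L h hz0 (j+1)) (le_ciInf fun k => ?_)
  rcases le_or_gt k (j+1) with hk | hk
  · exact L_down h j z hz2 k hk
  · exact L_up h (j+1) hz1 k hk.le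

lemma G_top (h : Good γ T) {z : ℝ} (hz : P γ T 0 ≤ z) : G γ T z = V γ T 0 := by
  have hz0 : 0 ≤ z := le_trans (P_pos h 0).le hz
  have hL0 : L γ T 0 z = V γ T 0 := by
    show V γ T 0 + (0:ℝ) * (z - P γ T 0) = V γ T 0
    ring
  refine le_antisymm (hL0 ▸ G_le_L h hz0 0) (le_ciInf fun k => ?_)
  rw [← hL0]
  exact L_up h 0 hz k (Nat.zero_le k)

lemma L_at_P (h : Good γ T) (j : ℕ) : L γ T (j+1) (P γ T (j+1)) = V γ T (j+1) := by
  show V γ T (j+1) + M γ T (j+1) * (P γ T (j+1) - P γ T (j+1)) = _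
  ring

lemma G_at_P (h : Good γ T) (j : ℕ) : G γ T (P γ T j) = V γ T j := by
  cases j with
  | zero => exact G_top h (le_refl _)
  | succ j =>
    rw [G_piece h j (le_refl _) (P_anti h (Nat.lt_succ_self j)).le]
    exact L_at_P h j

lemma G_xx (h : Good γ T) (n : ℕ) : G γ T (xx γ T n) = gg γ T n := by
  have := G_at_P h (2*n+1)
  rwa [P_odd, V_odd] at this

lemma G_yy (h : Good γ T) (n : ℕ) : G γ T (yy γ T n) = hh γ T n := by
  have := G_at_P h (2*n)
  rwa [P_even, V_even] at this

lemma G_mono (h : Good γ T) {a b : ℝ} (ha : 0 ≤ a) (hab : a ≤ b) :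
    G γ T a ≤ G γ T b := by
  refine le_ciInf fun j => le_trans (G_le_L h ha j) ?_
  show V γ T j + M γ T j * (a - P γ T j) ≤ V γ T j + M γ T j * (b - P γ T j)
  have := M_nonneg h j
  nlinarith

lemma gg_tendsto (h : Good γ T) : Tendsto (gg γ T) atTop (nhds 0) := by
  have h1 : Tendsto (fun n => tt γ T (n+1)) atTop atTop :=
    (tt_tendsto h).comp (tendsto_add_atTop_nat 1)
  have h2 : Tendsto (fun n => (tt γ T (n+1)) ^ (γ:ℝ)) atTop atTop :=
    (tendsto_rpow_atTop h.hγ0).comp h1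
  have h3 : Tendsto (fun n => ((tt γ T (n+1)) ^ (γ:ℝ))⁻¹) atTop (nhds 0) :=
    h2.inv_tendsto_atTop
  refine h3.congr fun n => ?_
  rw [← Real.rpow_neg (tt_pos h (n+1)).le]
  rfl

lemma G_zero (h : Good γ T) : G γ T 0 = 0 := by
  refine le_antisymm ?_ (G_nonneg h (le_refl 0))
  have key : ∀ n, G γ T 0 ≤ gg γ T n := by
    intro n
    refine le_trans (G_le_L h (le_refl 0) (2*n+1)) ?_
    show V γ T (2*n+1) + M γ T (2*n+1) * (0 - P γ T (2*n+1)) ≤ _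
    rw [V_odd]
    have h1 := M_nonneg h (2*n+1)
    have h2 := (P_pos h (2*n+1)).le
    nlinarith
  exact ge_of_tendsto (gg_tendsto h) (Filter.Eventually.of_forall key)

lemma G_concave (h : Good γ T) : ConcaveOn ℝ (Set.Icc (0:ℝ) 1) (G γ T) := by
  refine ⟨convex_Icc 0 1, ?_⟩
  rintro a ⟨ha0, _⟩ b ⟨hb0, _⟩ p q hp hq hpq
  simp only [smul_eq_mul]
  refine le_ciInf fun j => ?_
  have hL : L γ T j (p * a + q * b) = p * L γ T j a + q * L γ T j b := by
    show V γ T j + M γ T j * (p*a + q*b - P γ T j)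
        = p * (V γ T j + M γ T j * (a - P γ T j)) + q * (V γ T j + M γ T j * (b - P γ T j))
    have : q = 1 - p := by linarith
    subst this
    ring
  rw [hL]
  have h1 : p * G γ T a ≤ p * L γ T j a :=
    mul_le_mul_of_nonneg_left (G_le_L h ha0 j) hp
  have h2 : q * G γ T b ≤ q * L γ T j b :=
    mul_le_mul_of_nonneg_left (G_le_L h hb0 j) hq
  linarith


lemma L_continuous (j : ℕ) : Continuous (L γ T j) := by
  unfold L
  fun_prop

lemma xx_tendsto (h : Good γ T) : Tendsto (xx γ T) atTop (nhds 0) := by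
  have h1 : Tendsto (fun n => -(tt γ T n)) atTop atBot :=
    tendsto_neg_atTop_atBot.comp (tt_tendsto h)
  exact Real.tendsto_exp_atBot.comp h1

lemma G_eq_finmin (h : Good γ T) (J : ℕ) {z : ℝ} (hz : P γ T J ≤ z) :
    G γ T z = (Finset.range (J+1)).inf' ⟨J, by simp⟩ (fun k => L γ T k z) := by
  have hz0 : 0 ≤ z := le_trans (P_pos h J).le hz
  apply le_antisymm
  · exact Finset.le_inf' _ _ fun k _ => G_le_L h hz0 k
  · refine le_ciInf fun k => ?_
    rcases le_or_gt k J with hk | hk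
    · exact Finset.inf'_le _ (by simp [Finset.mem_range]; omega)
    · exact le_trans (Finset.inf'_le _ (by simp)) (L_up h J hz k hk.le)

lemma G_contAt (h : Good γ T) {z : ℝ} (hz : 0 < z) : ContinuousAt (G γ T) z := by
  obtain ⟨n, hn⟩ : ∃ n, xx γ T n < z :=
    ((xx_tendsto h).eventually (gt_mem_nhds hz)).exists
  have hPJ : P γ T (2*n+1) = xx γ T n := P_odd n
  have hcont : Continuous (fun w => (Finset.range (2*n+1+1)).inf'
      ⟨2*n+1, by simp⟩ (fun k => L γ T k w)) :=
    Continuous.finset_inf'_apply _ fun i _ => L_continuous i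
  refine hcont.continuousAt.congr ?_
  filter_upwards [Ioi_mem_nhds hn] with w hw
  exact (G_eq_finmin h (2*n+1) (by rw [hPJ]; exact (le_of_lt hw))).symm

lemma G_contAt0 (h : Good γ T) : ContinuousWithinAt (G γ T) (Set.Icc 0 1) 0 := by
  have h0 : G γ T 0 = 0 := G_zero h
  rw [ContinuousWithinAt, h0, Metric.tendsto_nhdsWithin_nhds]
  intro ε hε
  obtain ⟨n, hn⟩ : ∃ n, gg γ T n < ε/2 :=
    ((gg_tendsto h).eventually (gt_mem_nhds (by linarith : (0:ℝ) < ε/2))).exists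
  have hm : 0 ≤ M γ T (2*n+1) := M_nonneg h (2*n+1)
  refine ⟨(ε/2)/(M γ T (2*n+1)+1), by positivity, ?_⟩
  intro w hw hdist
  rw [Real.dist_eq, sub_zero] at hdist
  have hw0 : 0 ≤ w := hw.1
  rw [abs_of_nonneg hw0] at hdist
  rw [Real.dist_eq, sub_zero, abs_of_nonneg (G_nonneg h hw0)]
  have h1 : G γ T w ≤ gg γ T n + M γ T (2*n+1) * w := by
    refine le_trans (G_le_L h hw0 (2*n+1)) ?_
    show V γ T (2*n+1) + M γ T (2*n+1) * (w - P γ T (2*n+1)) ≤ _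
    rw [V_odd]
    have h2 := (P_pos h (2*n+1)).le
    nlinarith
  have h2 : M γ T (2*n+1) * w ≤ ε/2 := by
    rcases eq_or_lt_of_le hm with he | hlt
    · rw [← he]; linarith
    · have : w ≤ (ε/2)/(M γ T (2*n+1)+1) := hdist.le
      calc M γ T (2*n+1) * w ≤ M γ T (2*n+1) * ((ε/2)/(M γ T (2*n+1)+1)) :=
            mul_le_mul_of_nonneg_left this hm
      _ ≤ ε/2 := by
          rw [mul_div_assoc']
          rw [div_le_iff₀ (by linarith)]
          nlinarith
  linarith

lemma G_continuousOn (h : Good γ T) : ContinuousOn (G γ T) (Set.Icc 0 1) := by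
  intro z hz
  rcases eq_or_lt_of_le hz.1 with he | hlt
  · rw [← he]; exact G_contAt0 h
  · exact (G_contAt h hlt).continuousWithinAt

lemma G_monotoneOn (h : Good γ T) : MonotoneOn (G γ T) (Set.Icc 0 1) :=
  fun a ha _ _ hab => G_mono h ha.1 hab

lemma exists_piece (h : Good γ T) {x : ℝ} (hx0 : 0 < x) :
    ∃ n, xx γ T (n+1) < x ∧ (n = 0 ∨ x ≤ xx γ T n) := by
  classical
  have hex : ∃ m, xx γ T m < x := ((xx_tendsto h).eventually (gt_mem_nhds hx0)).exists
  have hspec := Nat.find_spec hex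
  rcases Nat.eq_zero_or_eq_succ_pred (Nat.find hex) with h1 | h1
  · refine ⟨0, ?_, Or.inl rfl⟩
    rw [h1] at hspec
    have hx10 : xx γ T 1 < xx γ T 0 := by
      unfold xx
      exact Real.exp_lt_exp.mpr (by linarith [tt_lt_succ h 0])
    linarith
  · set k := (Nat.find hex) - 1 with hk
    refine ⟨k, ?_, Or.inr ?_⟩
    · rw [h1] at hspec; exact hspec
    · by_contra hc
      push_neg at hc
      have := Nat.find_min hex (m := k) (by omega)
      exact this hc

lemma G_upper (h : Good γ T) {x : ℝ} (hx0 : 0 < x) (hx1 : x ≤ xx γ T 0) :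
    G γ T x ≤ (-Real.log x) ^ (-γ:ℝ) * Real.log (-Real.log x) := by
  obtain ⟨n, hn1, hn2'⟩ := exists_piece h hx0
  have hn2 : x ≤ xx γ T n := by
    rcases hn2' with he | hle
    · rw [he]; exact hx1
    · exact hle
  set Lx := -Real.log x with hLx
  have hL1 : tt γ T n ≤ Lx := by
    have := Real.log_le_log hx0 hn2
    unfold xx at this
    rw [Real.log_exp] at this
    linarith
  have hL2 : Lx ≤ tt γ T (n+1) := by
    have := Real.log_le_log (xx_pos (γ:=γ) (T:=T) (n+1)) hn1.le
    unfold xx at this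
    rw [Real.log_exp] at this
    linarith
  have hLpos : 0 < Lx := lt_of_lt_of_le (tt_pos h n) hL1
  have step1 : G γ T x ≤ gg γ T n := by
    rw [← G_xx h n]; exact G_mono h hx0.le hn2
  have step2 : gg γ T n ≤ Lx ^ (-γ:ℝ) :=
    Real.rpow_le_rpow_of_nonpos hLpos hL2 (by linarith [h.hγ0])
  have hlogL : 1 ≤ Real.log Lx := by
    have h4 : Real.exp 4 ≤ Lx := le_trans (exp4_le_tt h n) hL1
    have := Real.log_le_log (Real.exp_pos 4) h4
    rw [Real.log_exp] at this
    linarith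
  calc G γ T x ≤ Lx ^ (-γ:ℝ) := le_trans step1 step2
  _ = Lx ^ (-γ:ℝ) * 1 := by ring
  _ ≤ Lx ^ (-γ:ℝ) * Real.log Lx :=
      mul_le_mul_of_nonneg_left hlogL (Real.rpow_nonneg hLpos.le _)

lemma ratio_eq (h : Good γ T) (n : ℕ) :
    (1/2 : ℝ) * Real.log (tt γ T n) = hh γ T n / gg γ T n := by
  have hg := gg_pos h n
  have hid := gg_mul_log h n
  field_simp
  linarith

lemma xx_strictAnti (h : Good γ T) : StrictAnti (xx γ T) := by
  apply strictAnti_nat_of_succ_lt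
  intro n
  unfold xx
  exact Real.exp_lt_exp.mpr (by linarith [tt_lt_succ h n])

lemma harg (h : Good γ T) (n : ℕ) :
    xx γ T n * G γ T (xx γ T n) * (-Real.log (xx γ T n)) = yy γ T n := by
  rw [G_xx h n]
  unfold yy xx
  rw [Real.log_exp, neg_neg]

end LossModulus

open LossModulus

/-- Proposition 4.1 combined with Remark 5.2: the constructed modulus is bounded above,
near the origin, by `Ω̄(ρ) = (−log ρ)^{−γ}·log(−log ρ)`. -/
theorem loss_modulus_construction_upper_bound (γ : ℝ) (hγ0 : 0 < γ) (hγ1 : γ < 1) :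
    ∃ x₀ ∈ Set.Ioo (0:ℝ) 1, ∃ G : ℝ → ℝ,
      ContinuousOn G (Set.Icc 0 1) ∧
      MonotoneOn G (Set.Icc 0 1) ∧
      ConcaveOn ℝ (Set.Icc 0 1) G ∧
      G 0 = 0 ∧
      (∀ x ∈ Set.Ioc (0:ℝ) x₀,
        G x ≤ (-Real.log x) ^ (-γ) * Real.log (-Real.log x)) ∧
      (∃ x : ℕ → ℝ,
        StrictAnti x ∧
        (∀ n, x n ∈ Set.Ioc (0:ℝ) x₀) ∧
        Filter.Tendsto x Filter.atTop (nhds 0) ∧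
        (∀ n, x n * G (x n) * (-Real.log (x n)) ∈ Set.Ioc (0:ℝ) 1) ∧
        (∀ n, (1/2) * Real.log (-Real.log (x n)) ≤
            G (x n * G (x n) * (-Real.log (x n))) / G (x n))) := by
  obtain ⟨T, h⟩ := good_exists hγ0 hγ1
  refine ⟨xx γ T 0, ⟨xx_pos 0, xx_lt_one h 0⟩, G γ T, G_continuousOn h, G_monotoneOn h,
    G_concave h, G_zero h, ?_, xx γ T, xx_strictAnti h, ?_, xx_tendsto h, ?_, ?_⟩
  · intro x hx
    exact G_upper h hx.1 hx.2
  · intro n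
    exact ⟨xx_pos n, (xx_strictAnti h).antitone (Nat.zero_le n)⟩
  · intro n
    rw [harg h n]
    exact ⟨yy_pos h n, (yy_lt_one h n).le⟩
  · intro n
    rw [harg h n, G_xx h n, G_yy h n]
    have hlogx : -Real.log (xx γ T n) = tt γ T n := by
      unfold xx; rw [Real.log_exp, neg_neg]
    rw [hlogx, ratio_eq h n]
end

section
/- Let γ ∈ (0,1) and b ∈ (0,1]. Suppose ω₀ : ℝ² → ℝ satisfies |ω₀(x) − ω₀(y)| ≤ (−log |x−y|)^{−γ} for all x, y ∈ ℝ² with 0 < |x−y| ≤ 1/2, and suppose Ψ : ℝ² → ℝ² satisfies |Ψ(x) − Ψ(y)| ≤ |x−y|^b for all x, y with |x−y| ≤ 2^{−1/b}. Then for all x, y with 0 < |x−y| ≤ 2^{−1/b} one has |ω₀(Ψ(x)) − ω₀(Ψ(y))| ≤ b^{−γ}·(−log |x−y|)^{−γ}. -/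
open Real Set

/-- Proposition 3.1 (core estimate): the modulus `Ω(ρ) = (−log ρ)^{−γ}`, `0 < γ < 1`,
is propagated under composition with a map `Ψ` satisfying the Yudovich-Hölder bound
`|Ψ(x) − Ψ(y)| ≤ |x−y|^b`, with constant `b^{−γ}`. -/
theorem propagation_log_modulus (γ b : ℝ) (hγ0 : 0 < γ) (hγ1 : γ < 1)
    (hb0 : 0 < b) (hb1 : b ≤ 1)
    (ω₀ : EuclideanSpace ℝ (Fin 2) → ℝ)
    (hω : ∀ x y : EuclideanSpace ℝ (Fin 2), 0 < ‖x - y‖ → ‖x - y‖ ≤ 1/2 →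
      |ω₀ x - ω₀ y| ≤ (-Real.log ‖x - y‖) ^ (-γ))
    (Ψ : EuclideanSpace ℝ (Fin 2) → EuclideanSpace ℝ (Fin 2))
    (hΨ : ∀ x y : EuclideanSpace ℝ (Fin 2), ‖x - y‖ ≤ (2:ℝ) ^ (-1/b) →
      ‖Ψ x - Ψ y‖ ≤ ‖x - y‖ ^ b) :
    ∀ x y : EuclideanSpace ℝ (Fin 2), 0 < ‖x - y‖ → ‖x - y‖ ≤ (2:ℝ) ^ (-1/b) →
      |ω₀ (Ψ x) - ω₀ (Ψ y)| ≤ b ^ (-γ) * (-Real.log ‖x - y‖) ^ (-γ) := by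
  intro x y hr0 hr2
  set r := ‖x - y‖ with hr
  have hrb : r ^ b ≤ 1/2 := by
    calc r ^ b ≤ ((2:ℝ) ^ (-1/b)) ^ b :=
          Real.rpow_le_rpow (le_of_lt hr0) hr2 hb0.le
      _ = (2:ℝ) ^ (-1:ℝ) := by
          rw [← Real.rpow_mul (by norm_num : (0:ℝ) ≤ 2)]
          congr 1
          field_simp
      _ = 1/2 := by
          rw [Real.rpow_neg_one]; norm_num
  have hΨxy : ‖Ψ x - Ψ y‖ ≤ r ^ b := hΨ x y hr2
  -- r ≤ 2^{-1/b} ≤ 1/2 < 1, so -log r ≥ log 2 > 0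
  have hr1 : r ≤ 1/2 := by
    calc r = (r ^ b) ^ (1/b) := by
          rw [← Real.rpow_mul hr0.le, mul_one_div, div_self hb0.ne', Real.rpow_one]
      _ ≤ (1/2 : ℝ) ^ (1/b) := Real.rpow_le_rpow (Real.rpow_nonneg hr0.le b) hrb (by positivity)
      _ ≤ (1/2 : ℝ) ^ (1:ℝ) := by
          apply Real.rpow_le_rpow_of_exponent_ge (by norm_num) (by norm_num)
          rw [le_div_iff₀ hb0]; linarith
      _ = 1/2 := by norm_num
  have hlogr : Real.log r < 0 :=
    Real.log_neg hr0 (by linarith)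
  have hnl0 : 0 < -Real.log r := by linarith
  have hposrhs : 0 ≤ b ^ (-γ) * (-Real.log r) ^ (-γ) := by positivity
  rcases eq_or_lt_of_le (norm_nonneg (Ψ x - Ψ y)) with h0 | h0
  · have : Ψ x - Ψ y = 0 := by
      rw [← norm_eq_zero]; exact h0.symm
    have : Ψ x = Ψ y := by
      have := sub_eq_zero.mp this; exact this
    rw [this, sub_self, abs_zero]
    exact hposrhs
  · have hΨhalf : ‖Ψ x - Ψ y‖ ≤ 1/2 := le_trans hΨxy hrb
    have key := hω (Ψ x) (Ψ y) h0 hΨhalf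
    refine key.trans ?_
    have hlogΨ : b * (-Real.log r) ≤ -Real.log ‖Ψ x - Ψ y‖ := by
      have h1 : Real.log ‖Ψ x - Ψ y‖ ≤ Real.log (r ^ b) :=
        Real.log_le_log h0 hΨxy
      rw [Real.log_rpow hr0] at h1
      nlinarith
    calc (-Real.log ‖Ψ x - Ψ y‖) ^ (-γ) ≤ (b * (-Real.log r)) ^ (-γ) :=
          Real.rpow_le_rpow_of_nonpos (by positivity) hlogΨ (by linarith)
      _ = b ^ (-γ) * (-Real.log r) ^ (-γ) :=
          Real.mul_rpow hb0.le hnl0.le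
end

section
/- Let γ ∈ (0,1) and b ∈ (0,1]. Suppose ω₀ : ℝ² → ℝ satisfies |ω₀(x) − ω₀(y)| ≤ (−log |x−y|)^{−γ}·log(−log |x−y|) for all x, y ∈ ℝ² with 0 < |x−y| ≤ exp(−e^{1/γ}), and suppose Ψ : ℝ² → ℝ² satisfies |Ψ(x) − Ψ(y)| ≤ |x−y|^b for all x, y with |x−y| ≤ exp(−e^{1/γ}/b). Then for all x, y with 0 < |x−y| ≤ exp(−e^{1/γ}/b) one has |ω₀(Ψ(x)) − ω₀(Ψ(y))| ≤ b^{−γ}·(−log |x−y|)^{−γ}·log(−log |x−y|). -/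
/-!
Write `L = -log |x - y|` and `Ω(u) = u^{-γ} log u`, so that the modulus at `ρ` is `Ω(-log ρ)`.
The Hölder bound on `Ψ` gives `-log |Ψ x - Ψ y| ≥ b L ≥ e^{1/γ}`. Since `Ω` is decreasing on
`[e^{1/γ}, ∞)`, the modulus at `|Ψ x - Ψ y|` is at most `Ω(b L) = b^{-γ} L^{-γ} log (b L)`,
and `log (b L) ≤ log L` because `b ≤ 1`.
-/

open Real Set

theorem antitoneOn_rpow_neg_mul_log {γ : ℝ} (hγ : 0 < γ) :
    AntitoneOn (fun u : ℝ => u ^ (-γ) * log u) (Ici (exp (1 / γ))) := by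
  have hE : 0 < exp (1 / γ) := exp_pos _
  refine (strictAntiOn_of_deriv_neg (convex_Ici _) ?_ ?_).antitoneOn
  · intro u hu
    have hu0 : u ≠ 0 := (hE.trans_le hu).ne'
    exact ((continuousAt_rpow_const u (-γ) (Or.inl hu0)).mul
      (continuousAt_log hu0)).continuousWithinAt
  · intro u hu
    rw [interior_Ici] at hu
    have hu0 : 0 < u := hE.trans hu
    have hderiv : HasDerivAt (fun u : ℝ => u ^ (-γ) * log u)
        (-γ * u ^ (-γ - 1) * log u + u ^ (-γ) * u⁻¹) u :=
      (hasDerivAt_rpow_const (Or.inl hu0.ne')).mul (hasDerivAt_log hu0.ne')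
    have hlog : 1 < γ * log u := by
      rw [← div_lt_iff₀' hγ, ← log_exp (1 / γ)]
      exact log_lt_log hE hu
    have hpow : u ^ (-γ) * u⁻¹ = u ^ (-γ - 1) := by
      rw [rpow_sub hu0, rpow_one, div_eq_mul_inv]
    rw [hderiv.deriv, hpow]
    -- the derivative is `u^(-γ-1) (1 - γ log u)`
    nlinarith [rpow_pos_of_pos hu0 (-γ - 1)]

theorem rpow_neg_mul_log_mul_le {γ b L : ℝ} (hb0 : 0 < b) (hb1 : b ≤ 1) (hL : 0 < L) :
    (b * L) ^ (-γ) * log (b * L) ≤ b ^ (-γ) * L ^ (-γ) * log L := by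
  rw [mul_rpow hb0.le hL.le]
  gcongr
  exact mul_le_of_le_one_left hL.le hb1

theorem rpow_neg_mul_log_le_of_mul_le {γ b L u : ℝ} (hγ : 0 < γ) (hb0 : 0 < b) (hb1 : b ≤ 1)
    (hL : exp (1 / γ) ≤ b * L) (hu : b * L ≤ u) :
    u ^ (-γ) * log u ≤ b ^ (-γ) * L ^ (-γ) * log L := by
  have hL0 : 0 < L := pos_of_mul_pos_right ((exp_pos _).trans_le hL) hb0.le
  exact (antitoneOn_rpow_neg_mul_log hγ hL (hL.trans hu) hu).trans
    (rpow_neg_mul_log_mul_le hb0 hb1 hL0)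

theorem propagation_loglog_modulus_general (γ b : ℝ) (hγ0 : 0 < γ)
    (hb0 : 0 < b) (hb1 : b ≤ 1)
    (ω₀ : EuclideanSpace ℝ (Fin 2) → ℝ)
    (hω : ∀ x y : EuclideanSpace ℝ (Fin 2), 0 < ‖x - y‖ →
      ‖x - y‖ ≤ Real.exp (-(Real.exp (1/γ))) →
      |ω₀ x - ω₀ y| ≤ (-Real.log ‖x - y‖) ^ (-γ) * Real.log (-Real.log ‖x - y‖))
    (Ψ : EuclideanSpace ℝ (Fin 2) → EuclideanSpace ℝ (Fin 2))
    (hΨ : ∀ x y : EuclideanSpace ℝ (Fin 2),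
      ‖x - y‖ ≤ Real.exp (-(Real.exp (1/γ)) / b) → ‖Ψ x - Ψ y‖ ≤ ‖x - y‖ ^ b) :
    ∀ x y : EuclideanSpace ℝ (Fin 2), 0 < ‖x - y‖ →
      ‖x - y‖ ≤ Real.exp (-(Real.exp (1/γ)) / b) →
      |ω₀ (Ψ x) - ω₀ (Ψ y)| ≤
        b ^ (-γ) * (-Real.log ‖x - y‖) ^ (-γ) * Real.log (-Real.log ‖x - y‖) := by
  intro x y hr0 hr
  have hL : exp (1 / γ) ≤ b * -log ‖x - y‖ := by
    rw [← log_le_iff_le_exp hr0, neg_div, le_neg, div_le_iff₀' hb0] at hr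
    exact hr
  have hL1 : 1 ≤ -log ‖x - y‖ := by
    nlinarith [add_one_le_exp (1 / γ), one_div_pos.mpr hγ0]
  rcases (norm_nonneg (Ψ x - Ψ y)).eq_or_lt with hs | hs
  · rw [eq_comm, norm_sub_eq_zero_iff] at hs
    rw [hs, sub_self, abs_zero]
    have := log_nonneg hL1
    positivity
  · have hu : b * -log ‖x - y‖ ≤ -log ‖Ψ x - Ψ y‖ := by
      have := log_le_log hs (hΨ x y hr)
      rw [log_rpow hr0] at this
      linarith
    have hs' : ‖Ψ x - Ψ y‖ ≤ exp (-exp (1 / γ)) := by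
      rw [← log_le_iff_le_exp hs]
      linarith
    exact (hω _ _ hs hs').trans (rpow_neg_mul_log_le_of_mul_le hγ0 hb0 hb1 hL hu)

/-- Remark 3.3: the modulus `Ω(ρ) = (−log ρ)^{−γ}·log(−log ρ)`, `0 < γ < 1`,
is also propagated under composition with a map `Ψ` satisfying the Yudovich-Hölder bound
`|Ψ(x) − Ψ(y)| ≤ |x−y|^b`, with constant `b^{−γ}`. -/
theorem propagation_loglog_modulus (γ b : ℝ) (hγ0 : 0 < γ) (hγ1 : γ < 1)
    (hb0 : 0 < b) (hb1 : b ≤ 1)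
    (ω₀ : EuclideanSpace ℝ (Fin 2) → ℝ)
    (hω : ∀ x y : EuclideanSpace ℝ (Fin 2), 0 < ‖x - y‖ →
      ‖x - y‖ ≤ Real.exp (-(Real.exp (1/γ))) →
      |ω₀ x - ω₀ y| ≤ (-Real.log ‖x - y‖) ^ (-γ) * Real.log (-Real.log ‖x - y‖))
    (Ψ : EuclideanSpace ℝ (Fin 2) → EuclideanSpace ℝ (Fin 2))
    (hΨ : ∀ x y : EuclideanSpace ℝ (Fin 2),
      ‖x - y‖ ≤ Real.exp (-(Real.exp (1/γ)) / b) → ‖Ψ x - Ψ y‖ ≤ ‖x - y‖ ^ b) :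
    ∀ x y : EuclideanSpace ℝ (Fin 2), 0 < ‖x - y‖ →
      ‖x - y‖ ≤ Real.exp (-(Real.exp (1/γ)) / b) →
      |ω₀ (Ψ x) - ω₀ (Ψ y)| ≤
        b ^ (-γ) * (-Real.log ‖x - y‖) ^ (-γ) * Real.log (-Real.log ‖x - y‖) :=
  propagation_loglog_modulus_general γ b hγ0 hb0 hb1 ω₀ hω Ψ hΨ
end

section
/- Let T > 0, M > 0, and let u : [0,T] × ℝ² → ℝ² satisfy |u(t,x) − u(t,y)| ≤ M·|x−y|·(−log |x−y|) for all t ∈ [0,T] and all x, y ∈ ℝ² with 0 < |x−y| ≤ 1/2. Let X, Y : [0,T] → ℝ² be differentiable with X′(t) = u(t, X(t)) and Y′(t) = u(t, Y(t)) for all t ∈ [0,T], suppose 0 < |X(0) − Y(0)|, and suppose |X(t) − Y(t)| ≤ 1/2 for all t ∈ [0,T]. Then for every t ∈ [0,T] one has |X(0) − Y(0)|^{exp(Mt)} ≤ |X(t) − Y(t)| ≤ |X(0) − Y(0)|^{exp(−Mt)}. -/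
open Real Set Filter Topology

/-!
`c ^ exp (-(M * x))` solves `B' = M B (-log B)`, so it is a barrier for the norm of a curve whose
speed is at most `M ‖f‖ (-log ‖f‖)`. Raising `M` and `c` slightly makes the barrier strict, so the
fencing theorem applies, and letting the perturbation tend to zero gives the upper Hölder bound.
Running the curve backwards in time turns the upper bound into the lower one.
-/

section

variable {E : Type*} [NormedAddCommGroup E] [NormedSpace ℝ E]

theorem hasDerivAt_rpow_exp_neg_mul {c : ℝ} (hc : 0 < c) (M x : ℝ) :
    HasDerivAt (fun y => c ^ exp (-(M * y)))
      (M * c ^ exp (-(M * x)) * -log (c ^ exp (-(M * x)))) x := by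
  convert ((hasDerivAt_id' x).const_mul M).fun_neg.exp.const_rpow hc using 1
  rw [log_rpow hc]
  ring

theorem norm_le_rpow_exp_of_lt {f f' : ℝ → E} {b M M' c : ℝ}
    (hf : ContinuousOn f (Icc 0 b))
    (hf' : ∀ x ∈ Ico 0 b, HasDerivWithinAt f (f' x) (Ici x) x)
    (hbound : ∀ x ∈ Ico 0 b, 0 < ‖f x‖ → ‖f x‖ < 1 → ‖f' x‖ ≤ M * ‖f x‖ * -log ‖f x‖)
    (hMM' : M < M') (hc0 : 0 < c) (hc1 : c < 1) (hfc : ‖f 0‖ ≤ c) :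
    ∀ x ∈ Icc 0 b, ‖f x‖ ≤ c ^ exp (-(M' * x)) := by
  refine image_norm_le_of_norm_deriv_right_lt_deriv_boundary hf hf' (by simpa using hfc)
    (hasDerivAt_rpow_exp_neg_mul hc0 M') fun x hx hfx => ?_
  set B := c ^ exp (-(M' * x))
  have hB0 : 0 < B := rpow_pos_of_pos hc0 _
  have hB1 : B < 1 := rpow_lt_one hc0.le hc1 (exp_pos _)
  have hBlog : 0 < B * -log B := mul_pos hB0 (neg_pos.2 (log_neg hB0 hB1))
  calc ‖f' x‖ ≤ M * B * -log B := hfx ▸ hbound x hx (hfx ▸ hB0) (hfx ▸ hB1)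
    _ < M' * B * -log B := by
      rw [mul_assoc, mul_assoc]
      exact mul_lt_mul_of_pos_right hMM' hBlog

theorem norm_le_rpow_exp {f f' : ℝ → E} {b M : ℝ}
    (hf : ContinuousOn f (Icc 0 b))
    (hf' : ∀ x ∈ Ico 0 b, HasDerivWithinAt f (f' x) (Ici x) x)
    (hbound : ∀ x ∈ Ico 0 b, 0 < ‖f x‖ → ‖f x‖ < 1 → ‖f' x‖ ≤ M * ‖f x‖ * -log ‖f x‖)
    (hf0 : ‖f 0‖ < 1) :
    ∀ x ∈ Icc 0 b, ‖f x‖ ≤ ‖f 0‖ ^ exp (-(M * x)) := by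
  intro x hx
  have hcont : ContinuousAt (fun ε => (‖f 0‖ + ε) ^ exp (-((M + ε) * x))) 0 :=
    (continuousAt_const.add continuousAt_id).rpow (by fun_prop) (Or.inr (exp_pos _))
  have hlim : Tendsto (fun ε => (‖f 0‖ + ε) ^ exp (-((M + ε) * x))) (𝓝[>] 0)
      (𝓝 (‖f 0‖ ^ exp (-(M * x)))) := by
    simpa using hcont.tendsto.mono_left nhdsWithin_le_nhds
  have hsmall : ∀ᶠ ε in 𝓝[>] (0 : ℝ), ε < 1 - ‖f 0‖ :=
    nhdsWithin_le_nhds (gt_mem_nhds (by linarith))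
  refine ge_of_tendsto hlim ?_
  filter_upwards [self_mem_nhdsWithin, hsmall] with ε (hε : 0 < ε) hε1
  exact norm_le_rpow_exp_of_lt hf hf' hbound (lt_add_of_pos_right M hε) (by positivity)
    (by linarith) (le_add_of_nonneg_right hε.le) x hx

theorem norm_le_rpow_exp_of_hasDerivAt {f f' : ℝ → E} {t M : ℝ}
    (hf : ∀ s ∈ Icc 0 t, HasDerivAt f (f' s) s)
    (hbound : ∀ s ∈ Icc 0 t, 0 < ‖f s‖ → ‖f s‖ < 1 → ‖f' s‖ ≤ M * ‖f s‖ * -log ‖f s‖)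
    (hf0 : ‖f 0‖ < 1) (ht : 0 ≤ t) :
    ‖f t‖ ≤ ‖f 0‖ ^ exp (-(M * t)) :=
  norm_le_rpow_exp (fun s hs => (hf s hs).continuousAt.continuousWithinAt)
    (fun s hs => (hf s (Ico_subset_Icc_self hs)).hasDerivWithinAt)
    (fun s hs => hbound s (Ico_subset_Icc_self hs)) hf0 t ⟨ht, le_rfl⟩

theorem rpow_exp_le_norm_of_hasDerivAt {f f' : ℝ → E} {t M : ℝ}
    (hf : ∀ s ∈ Icc 0 t, HasDerivAt f (f' s) s)
    (hbound : ∀ s ∈ Icc 0 t, 0 < ‖f s‖ → ‖f s‖ < 1 → ‖f' s‖ ≤ M * ‖f s‖ * -log ‖f s‖)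
    (hft : ‖f t‖ < 1) (ht : 0 ≤ t) :
    ‖f 0‖ ^ exp (M * t) ≤ ‖f t‖ := by
  have hreflect : ∀ s ∈ Icc 0 t, t - s ∈ Icc 0 t := fun s hs =>
    ⟨sub_nonneg.2 hs.2, sub_le_self t hs.1⟩
  have hback : ‖f 0‖ ≤ ‖f t‖ ^ exp (-(M * t)) := by
    simpa using norm_le_rpow_exp_of_hasDerivAt (f := fun s => f (t - s))
      (fun s hs => (hf _ (hreflect s hs)).comp_const_sub t s)
      (fun s hs => by simpa only [norm_neg] using hbound _ (hreflect s hs))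
      (by simpa using hft) ht
  calc ‖f 0‖ ^ exp (M * t) ≤ (‖f t‖ ^ exp (-(M * t))) ^ exp (M * t) :=
        rpow_le_rpow (norm_nonneg _) hback (exp_pos _).le
    _ = ‖f t‖ := by
      rw [← rpow_mul (norm_nonneg _), ← exp_add, neg_add_cancel, exp_zero, rpow_one]

end

theorem yudovich_flow_estimate_general (T M : ℝ)
    (u : ℝ → EuclideanSpace ℝ (Fin 2) → EuclideanSpace ℝ (Fin 2))
    (hu : ∀ t ∈ Set.Icc (0:ℝ) T, ∀ x y : EuclideanSpace ℝ (Fin 2),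
        0 < ‖x - y‖ → ‖x - y‖ ≤ 1/2 →
        ‖u t x - u t y‖ ≤ M * ‖x - y‖ * (-Real.log ‖x - y‖))
    (X Y : ℝ → EuclideanSpace ℝ (Fin 2))
    (hX : ∀ t ∈ Set.Icc (0:ℝ) T, HasDerivAt X (u t (X t)) t)
    (hY : ∀ t ∈ Set.Icc (0:ℝ) T, HasDerivAt Y (u t (Y t)) t)
    (hsep : ∀ t ∈ Set.Icc (0:ℝ) T, ‖X t - Y t‖ ≤ 1/2) :
    ∀ t ∈ Set.Icc (0:ℝ) T,
      ‖X 0 - Y 0‖ ^ Real.exp (M * t) ≤ ‖X t - Y t‖ ∧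
      ‖X t - Y t‖ ≤ ‖X 0 - Y 0‖ ^ Real.exp (-(M * t)) := by
  intro t ht
  have hsub : Icc 0 t ⊆ Icc 0 T := Icc_subset_Icc_right ht.2
  have hlt : ∀ s ∈ Icc 0 T, ‖X s - Y s‖ < 1 := fun s hs => (hsep s hs).trans_lt (by norm_num)
  have hZ : ∀ s ∈ Icc 0 t, HasDerivAt (fun r => X r - Y r) (u s (X s) - u s (Y s)) s :=
    fun s hs => (hX s (hsub hs)).sub (hY s (hsub hs))
  have hbound : ∀ s ∈ Icc 0 t, 0 < ‖X s - Y s‖ → ‖X s - Y s‖ < 1 →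
      ‖u s (X s) - u s (Y s)‖ ≤ M * ‖X s - Y s‖ * -log ‖X s - Y s‖ :=
    fun s hs hpos _ => hu s (hsub hs) _ _ hpos (hsep s (hsub hs))
  have h0T : (0 : ℝ) ∈ Icc 0 T := ⟨le_rfl, ht.1.trans ht.2⟩
  exact ⟨rpow_exp_le_norm_of_hasDerivAt hZ hbound (hlt t ht) ht.1,
    norm_le_rpow_exp_of_hasDerivAt hZ hbound (hlt 0 h0T) ht.1⟩

/-- Lemma 2.2 (Yudovich flow-map estimate): trajectories of a log-Lipschitz velocity field
separate at Hölder rates `|X(0)−Y(0)|^{exp(±Mt)}`. -/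
theorem yudovich_flow_estimate (T M : ℝ) (hT : 0 < T) (hM : 0 < M)
    (u : ℝ → EuclideanSpace ℝ (Fin 2) → EuclideanSpace ℝ (Fin 2))
    (hu : ∀ t ∈ Set.Icc (0:ℝ) T, ∀ x y : EuclideanSpace ℝ (Fin 2),
        0 < ‖x - y‖ → ‖x - y‖ ≤ 1/2 →
        ‖u t x - u t y‖ ≤ M * ‖x - y‖ * (-Real.log ‖x - y‖))
    (X Y : ℝ → EuclideanSpace ℝ (Fin 2))
    (hX : ∀ t ∈ Set.Icc (0:ℝ) T, HasDerivAt X (u t (X t)) t)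
    (hY : ∀ t ∈ Set.Icc (0:ℝ) T, HasDerivAt Y (u t (Y t)) t)
    (h0 : 0 < ‖X 0 - Y 0‖)
    (hsep : ∀ t ∈ Set.Icc (0:ℝ) T, ‖X t - Y t‖ ≤ 1/2) :
    ∀ t ∈ Set.Icc (0:ℝ) T,
      ‖X 0 - Y 0‖ ^ Real.exp (M * t) ≤ ‖X t - Y t‖ ∧
      ‖X t - Y t‖ ≤ ‖X 0 - Y 0‖ ^ Real.exp (-(M * t)) :=
  yudovich_flow_estimate_general T M u hu X Y hX hY hsep
end

section
/- For every γ ∈ (0,1) there exists x* ∈ (0,1) such that for all x ∈ (0, x*), setting y = x·(−log x)^{1−γ} (which satisfies x < y < 1), one has (x/y)·(log(−log y)/(−log y)^γ) ≤ 2·log(−log y)/(−log x) < 1/(−log x)^γ. -/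
open Real Set

/-- Property 1 in the proof of Proposition 4.1: for `y = x·(−log x)^{1−γ}`, the line
through the origin and `(y, log(−log y)/(−log y)^γ)`, evaluated at `x`, lies strictly
below `1/(−log x)^γ`. -/
theorem construction_property_one (γ : ℝ) (hγ0 : 0 < γ) (hγ1 : γ < 1) :
    ∃ xs ∈ Set.Ioo (0:ℝ) 1, ∀ x ∈ Set.Ioo (0:ℝ) xs, ∀ y : ℝ,
      y = x * (-Real.log x) ^ (1 - γ) →
      (x < y ∧ y < 1) ∧
      (x / y) * (Real.log (-Real.log y) / (-Real.log y) ^ γ) ≤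
        2 * Real.log (-Real.log y) / (-Real.log x) ∧
      2 * Real.log (-Real.log y) / (-Real.log x) < 1 / (-Real.log x) ^ γ := by
  set δ : ℝ := 1 - γ with hδdef
  have hδ : 0 < δ := by simp only [hδdef]; linarith
  have hδ1 : δ ≤ 1 := by simp only [hδdef]; linarith
  obtain ⟨C, hC16, hCB⟩ : ∃ C : ℝ, 16 < C ∧ (4/δ) ^ ((2:ℝ)/δ) < C :=
    ⟨max 16 ((4/δ) ^ ((2:ℝ)/δ)) + 1,
      by linarith [le_max_left (16:ℝ) ((4/δ) ^ ((2:ℝ)/δ))],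
      by linarith [le_max_right (16:ℝ) ((4/δ) ^ ((2:ℝ)/δ))]⟩
  have hC0 : (0:ℝ) < C := by linarith
  refine ⟨Real.exp (-C), ⟨Real.exp_pos _, ?_⟩, ?_⟩
  · have : (-C) < 0 := by linarith
    exact Real.exp_lt_one_iff.mpr this
  intro x hx y hy
  obtain ⟨hx0, hxC⟩ := hx
  set L : ℝ := -Real.log x with hLdef
  have hLC : C < L := by
    have h := Real.log_lt_log hx0 hxC
    rw [Real.log_exp] at h
    simp only [hLdef]; linarith
  have hL16 : (16:ℝ) < L := by linarith
  have hL1 : (1:ℝ) < L := by linarith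
  have hL0 : (0:ℝ) < L := by linarith
  have hlogL0 : 0 < Real.log L := Real.log_pos hL1
  -- log L ≤ L / 2
  have hsq : Real.log L ≤ L / 2 := by
    have h1 : Real.log L ≤ L ^ ((1:ℝ)/2) / (1/2) :=
      Real.log_le_rpow_div hL0.le (by norm_num)
    have h2 : L ^ ((1:ℝ)/2) ≤ L / 4 := by
      set s := L ^ ((1:ℝ)/2) with hs
      have hs0 : 0 ≤ s := Real.rpow_nonneg hL0.le _
      have hs2 : s * s = L := by
        rw [hs, ← Real.rpow_add hL0]; norm_num
      nlinarith [sq_nonneg (s - 4)]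
    linarith
  have hLδ0 : 0 < L ^ δ := Real.rpow_pos_of_pos hL0 δ
  have hLγ0 : 0 < L ^ γ := Real.rpow_pos_of_pos hL0 γ
  -- x < y and y > 0
  have hxy : x < y := by
    have h1 : 1 < L ^ δ := by
      rw [Real.one_lt_rpow_iff_of_pos hL0]; left; exact ⟨hL1, hδ⟩
    calc x = x * 1 := (mul_one x).symm
    _ < x * L ^ δ := by exact mul_lt_mul_of_pos_left h1 hx0
    _ = y := by rw [hy]
  have hy0 : 0 < y := lt_trans hx0 hxy
  -- M = -log y = L - δ log L
  set M : ℝ := -Real.log y with hMdef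
  have hM : M = L - δ * Real.log L := by
    rw [hMdef, hy, Real.log_mul hx0.ne' (Real.rpow_pos_of_pos hL0 δ).ne',
      Real.log_rpow hL0]
    simp only [hLdef]; ring
  have hδlogL : 0 ≤ δ * Real.log L := mul_nonneg hδ.le hlogL0.le
  have hδlogL2 : δ * Real.log L ≤ L / 2 := by
    calc δ * Real.log L ≤ 1 * Real.log L :=
        mul_le_mul_of_nonneg_right hδ1 hlogL0.le
    _ = Real.log L := one_mul _
    _ ≤ L / 2 := hsq
  have hMhalf : L / 2 ≤ M := by rw [hM]; linarith
  have hMleL : M ≤ L := by rw [hM]; linarith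
  have hM1 : (1:ℝ) < M := by linarith
  have hM0 : (0:ℝ) < M := by linarith
  have hlogM0 : 0 < Real.log M := Real.log_pos hM1
  have hlogMle : Real.log M ≤ Real.log L := Real.log_le_log hM0 hMleL
  have hy1 : y < 1 := by
    have : Real.log y < 0 := by
      have : 0 < M := hM0
      simp only [hMdef] at this; linarith
    exact (Real.log_neg_iff hy0).mp (by linarith)
  have hMγ0 : 0 < M ^ γ := Real.rpow_pos_of_pos hM0 γ
  -- L^δ * L^γ = L
  have hLsplit : L ^ δ * L ^ γ = L := by
    rw [← Real.rpow_add hL0]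
    have : δ + γ = 1 := by simp only [hδdef]; ring
    rw [this, Real.rpow_one]
  -- L^γ ≤ 2 M^γ
  have hLγle : L ^ γ ≤ 2 * M ^ γ := by
    calc L ^ γ ≤ (2 * M) ^ γ :=
        Real.rpow_le_rpow hL0.le (by linarith) hγ0.le
    _ = 2 ^ γ * M ^ γ := Real.mul_rpow (by norm_num) hM0.le
    _ ≤ 2 * M ^ γ := by
        have h2γ : (2:ℝ) ^ γ ≤ 2 := by
          calc (2:ℝ) ^ γ ≤ (2:ℝ) ^ (1:ℝ) :=
              Real.rpow_le_rpow_of_exponent_le (by norm_num) (by linarith)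
          _ = 2 := Real.rpow_one 2
        exact mul_le_mul_of_nonneg_right h2γ hMγ0.le
  -- x / y = (L^δ)⁻¹
  have hxdy : x / y = (L ^ δ)⁻¹ := by
    rw [hy]; field_simp
  -- 2 log M < L^δ
  have h2logM : 2 * Real.log M < L ^ δ := by
    have hhalf : 0 < δ / 2 := by linarith
    have hlogLr : Real.log L ≤ L ^ (δ/2) / (δ/2) :=
      Real.log_le_rpow_div hL0.le hhalf
    have hsplit2 : L ^ (δ/2) * L ^ (δ/2) = L ^ δ := by
      rw [← Real.rpow_add hL0]; ring_nf
    have hB : 4 / δ < L ^ (δ/2) := by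
      have hb0 : (0:ℝ) ≤ (4/δ) ^ ((2:ℝ)/δ) := Real.rpow_nonneg (by positivity) _
      have h1 : ((4/δ) ^ ((2:ℝ)/δ)) ^ (δ/2) < L ^ (δ/2) :=
        Real.rpow_lt_rpow hb0 (by linarith) hhalf
      have h2 : ((4/δ) ^ ((2:ℝ)/δ)) ^ (δ/2) = 4/δ := by
        rw [← Real.rpow_mul (by positivity : (0:ℝ) ≤ 4/δ)]
        have : (2:ℝ)/δ * (δ/2) = 1 := by field_simp
        rw [this, Real.rpow_one]
      rwa [h2] at h1
    have hs0 : 0 < L ^ (δ/2) := Real.rpow_pos_of_pos hL0 _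
    have h3 : 2 * Real.log L ≤ (4/δ) * L ^ (δ/2) := by
      have : 2 * Real.log L ≤ 2 * (L ^ (δ/2) / (δ/2)) := by linarith
      calc 2 * Real.log L ≤ 2 * (L ^ (δ/2) / (δ/2)) := this
      _ = (4/δ) * L ^ (δ/2) := by field_simp; ring
    have h4 : (4/δ) * L ^ (δ/2) < L ^ (δ/2) * L ^ (δ/2) :=
      mul_lt_mul_of_pos_right hB hs0
    linarith [hsplit2 ▸ h4]
  refine ⟨⟨hxy, hy1⟩, ?_, ?_⟩
  · -- chord inequality
    rw [hxdy]
    have heq : (L ^ δ)⁻¹ * (Real.log M / M ^ γ) = Real.log M / (L ^ δ * M ^ γ) := by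
      field_simp
    rw [heq, div_le_div_iff₀ (by positivity) hL0]
    nlinarith [mul_le_mul_of_nonneg_left hLγle (mul_nonneg hlogM0.le hLδ0.le),
      hLsplit, mul_pos hlogM0 hLδ0]
  · -- 2 log M / L < 1 / L^γ
    rw [div_lt_div_iff₀ hL0 hLγ0, one_mul]
    calc 2 * Real.log M * L ^ γ < L ^ δ * L ^ γ :=
        mul_lt_mul_of_pos_right h2logM hLγ0
    _ = L := hLsplit
end

section
/- For every γ ∈ (0,1) there exists x* ∈ (0,1) such that for all x ∈ (0, x*), setting y = x·(−log x)^{1−γ} (which satisfies x < y < 1), one has ( log(−log y)/(−log y)^γ − 1/(−log x)^γ ) / (y − x) ≤ (2/x)·log(−log y)/(−log x) < (1/x)·(1/(−log x)^γ). -/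
open Real Set

private lemma core_lemma (γ t x y : ℝ) (hγ0 : 0 < γ) (hγ1 : γ < 1) (hx : 0 < x)
    (hlx : Real.log x = -t)
    (h1 : 4 ≤ t) (h2 : Real.log t ≤ t / 8)
    (h3 : 2 * Real.log t < t ^ (1 - γ)) (h4 : 4 ≤ t ^ (1 - γ))
    (hy : y = x * t ^ (1 - γ)) :
    (x < y ∧ y < 1) ∧
      (Real.log (-Real.log y) / (-Real.log y) ^ γ - 1 / t ^ γ) / (y - x) ≤
        (2 / x) * (Real.log (-Real.log y) / t) ∧
      (2 / x) * (Real.log (-Real.log y) / t) < (1 / x) * (1 / t ^ γ) := by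
  have ht0 : (0:ℝ) < t := by linarith
  have hlt0 : 0 < Real.log t := Real.log_pos (by linarith)
  have htp1 : (1:ℝ) < t ^ (1 - γ) := by linarith
  have htg0 : (0:ℝ) < t ^ γ := Real.rpow_pos_of_pos ht0 γ
  set s : ℝ := t - (1 - γ) * Real.log t with hs_def
  have hγlog : (1 - γ) * Real.log t ≤ Real.log t :=
    mul_le_of_le_one_left hlt0.le (by linarith)
  have hγlog0 : 0 ≤ (1 - γ) * Real.log t := mul_nonneg (by linarith) hlt0.le
  have hs_lb : 7 * t / 8 ≤ s := by rw [hs_def]; linarith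
  have hs1 : (1:ℝ) < s := by linarith
  have hs0 : (0:ℝ) < s := by linarith
  have hsle : s ≤ t := by rw [hs_def]; linarith
  have hy0 : 0 < y := by
    rw [hy]; exact mul_pos hx (Real.rpow_pos_of_pos ht0 _)
  have hlogy : Real.log y = -s := by
    rw [hy, Real.log_mul hx.ne' (Real.rpow_pos_of_pos ht0 _).ne', Real.log_rpow ht0, hlx,
      hs_def]
    ring
  have hny : -Real.log y = s := by rw [hlogy]; ring
  rw [hny]
  set L : ℝ := Real.log s with hL_def
  have hL0 : 0 < L := Real.log_pos hs1
  have hLle : L ≤ Real.log t := Real.log_le_log hs0 hsle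
  have hxy : x < y := by
    rw [hy]
    nth_rewrite 1 [← mul_one x]
    exact (mul_lt_mul_iff_right₀ hx).mpr htp1
  have hy1 : y < 1 := by
    rw [← Real.exp_log hy0, hlogy]
    exact Real.exp_lt_one_iff.mpr (by linarith)
  refine ⟨⟨hxy, hy1⟩, ?_, ?_⟩
  · -- chord inequality
    have hyx : y - x = x * (t ^ (1 - γ) - 1) := by rw [hy]; ring
    have hyx0 : 0 < y - x := by linarith
    rw [div_le_iff₀ hyx0]
    have hrhs : (2 / x) * (L / t) * (y - x) = 2 * L * (t ^ (1 - γ) - 1) / t := by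
      rw [hyx]; field_simp
    rw [hrhs]
    set u : ℝ := (1 - γ) * Real.log t / t with hu_def
    have hu0 : 0 ≤ u := by positivity
    have hu : u ≤ 1 / 8 := by
      rw [hu_def, div_le_iff₀ ht0]; nlinarith [h2, hγlog]
    have h1u : 0 < 1 - u := by linarith
    have hsu : s = t * (1 - u) := by
      rw [hs_def, hu_def]; field_simp
    have hsg : t ^ γ * (1 - u) ≤ s ^ γ := by
      calc t ^ γ * (1 - u) = t ^ γ * (1 - u) ^ (1:ℝ) := by rw [Real.rpow_one]
        _ ≤ t ^ γ * (1 - u) ^ γ :=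
            mul_le_mul_of_nonneg_left
              (Real.rpow_le_rpow_of_exponent_ge h1u (by linarith) hγ1.le) htg0.le
        _ = (t * (1 - u)) ^ γ := (Real.mul_rpow ht0.le h1u.le).symm
        _ = s ^ γ := by rw [← hsu]
    have hsgpos : 0 < t ^ γ * (1 - u) := by positivity
    have step1 : L / s ^ γ ≤ L / (t ^ γ * (1 - u)) :=
      div_le_div_of_nonneg_left hL0.le hsgpos hsg
    have hinv : 1 / (1 - u) ≤ 1 + 2 * u := by
      rw [div_le_iff₀ h1u]
      have hprod : 0 ≤ u * (1 - 2 * u) := mul_nonneg hu0 (by linarith)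
      have hring : (1 + 2 * u) * (1 - u) = 1 + u * (1 - 2 * u) := by ring
      linarith
    have step2 : L / (t ^ γ * (1 - u)) ≤ (L / t ^ γ) * (1 + 2 * u) := by
      have : L / (t ^ γ * (1 - u)) = (L / t ^ γ) * (1 / (1 - u)) := by
        field_simp
      rw [this]
      have hLt : 0 ≤ L / t ^ γ := by positivity
      exact mul_le_mul_of_nonneg_left hinv hLt
    have hid : t ^ γ * t ^ (1 - γ) = t := by
      rw [← Real.rpow_add ht0]; norm_num
    have hre : 2 * L * (t ^ (1 - γ) - 1) / t = (L / t ^ γ) * (2 - 2 / t ^ (1 - γ)) := by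
      set A := t ^ (1 - γ) with hA
      set B := t ^ γ with hB
      have htp0 : (0:ℝ) < A := by linarith
      have htB : (0:ℝ) < B := htg0
      rw [← hid]
      field_simp
    have hfrac : 2 / t ^ (1 - γ) ≤ 1 / 2 := by
      rw [div_le_iff₀ (by linarith : (0:ℝ) < t ^ (1 - γ))]; linarith
    have step3 : (L / t ^ γ) * (1 + 2 * u) ≤ 2 * L * (t ^ (1 - γ) - 1) / t := by
      rw [hre]
      have hLt : 0 ≤ L / t ^ γ := by positivity
      apply mul_le_mul_of_nonneg_left _ hLt
      linarith
    have h1tg : 0 ≤ 1 / t ^ γ := by positivity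
    linarith
  · -- strict inequality
    have key : 2 * L / t < 1 / t ^ γ := by
      rw [div_lt_div_iff₀ ht0 htg0, one_mul]
      calc 2 * L * t ^ γ ≤ 2 * Real.log t * t ^ γ :=
            mul_le_mul_of_nonneg_right (by linarith) htg0.le
        _ < t ^ (1 - γ) * t ^ γ := mul_lt_mul_of_pos_right h3 htg0
        _ = t := by rw [← Real.rpow_add ht0]; norm_num
    have h1x : 0 < 1 / x := by positivity
    calc (2 / x) * (L / t) = (1 / x) * (2 * L / t) := by ring
      _ < (1 / x) * (1 / t ^ γ) := (mul_lt_mul_iff_right₀ h1x).mpr key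

/-- Property 2 in the proof of Proposition 4.1: for `y = x·(−log x)^{1−γ}`, the slope of
the chord from `(x, 1/(−log x)^γ)` to `(y, log(−log y)/(−log y)^γ)` is strictly less
than the slope of the line connecting `(x, 1/(−log x)^γ)` to the origin. -/
theorem construction_property_two (γ : ℝ) (hγ0 : 0 < γ) (hγ1 : γ < 1) :
    ∃ xs ∈ Set.Ioo (0:ℝ) 1, ∀ x ∈ Set.Ioo (0:ℝ) xs, ∀ y : ℝ,
      y = x * (-Real.log x) ^ (1 - γ) →
      (x < y ∧ y < 1) ∧
      (Real.log (-Real.log y) / (-Real.log y) ^ γ - 1 / (-Real.log x) ^ γ) / (y - x) ≤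
        (2 / x) * (Real.log (-Real.log y) / (-Real.log x)) ∧
      (2 / x) * (Real.log (-Real.log y) / (-Real.log x)) <
        (1 / x) * (1 / (-Real.log x) ^ γ) := by
  have h1γ : (0:ℝ) < 1 - γ := by linarith
  have hev : ∀ᶠ t : ℝ in Filter.atTop,
      4 ≤ t ∧ Real.log t ≤ t / 8 ∧ 2 * Real.log t < t ^ (1 - γ) ∧ 4 ≤ t ^ (1 - γ) := by
    have e1 : ∀ᶠ t : ℝ in Filter.atTop, (4:ℝ) ≤ t := Filter.eventually_ge_atTop 4
    have e2 : ∀ᶠ t : ℝ in Filter.atTop, Real.log t ≤ t / 8 := by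
      have := (Real.isLittleO_log_id_atTop.bound (by norm_num : (0:ℝ) < 1/8))
      filter_upwards [this, Filter.eventually_ge_atTop (0:ℝ)] with t h ht0
      simp only [id_eq, Real.norm_eq_abs] at h
      rw [abs_of_nonneg ht0] at h
      have h' : Real.log t ≤ |Real.log t| := le_abs_self _
      linarith
    have e3 : ∀ᶠ t : ℝ in Filter.atTop, 2 * Real.log t < t ^ (1 - γ) := by
      have hb := (isLittleO_log_rpow_atTop h1γ).bound (by norm_num : (0:ℝ) < 1/4)
      filter_upwards [hb, Filter.eventually_gt_atTop (0:ℝ)] with t h ht0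
      have hp : (0:ℝ) < t ^ (1 - γ) := Real.rpow_pos_of_pos ht0 _
      simp only [Real.norm_eq_abs] at h
      rw [abs_of_pos hp] at h
      have h' : Real.log t ≤ |Real.log t| := le_abs_self _
      linarith
    have e4 : ∀ᶠ t : ℝ in Filter.atTop, (4:ℝ) ≤ t ^ (1 - γ) :=
      (tendsto_rpow_atTop h1γ).eventually_ge_atTop 4
    filter_upwards [e1, e2, e3, e4] with t h1 h2 h3 h4
    exact ⟨h1, h2, h3, h4⟩
  obtain ⟨T, hT⟩ := Filter.eventually_atTop.mp hev
  refine ⟨Real.exp (-(max T 1)), ⟨Real.exp_pos _, Real.exp_lt_one_iff.mpr (by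
    have : (1:ℝ) ≤ max T 1 := le_max_right _ _
    linarith)⟩, ?_⟩
  rintro x ⟨hx0, hxlt⟩ y hy
  set t : ℝ := -Real.log x with ht_def
  have hlog : Real.log x < -(max T 1) := by
    have := Real.log_lt_log hx0 hxlt
    rwa [Real.log_exp] at this
  have htT : T ≤ t := by
    have : max T 1 ≤ t := by rw [ht_def]; linarith
    exact le_trans (le_max_left _ _) this
  obtain ⟨h1, h2, h3, h4⟩ := hT t htT
  exact core_lemma γ t x y hγ0 hγ1 hx0 (by rw [ht_def]; ring) h1 h2 h3 h4 hy
end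

section
/- For every γ ∈ (0,1) there exists x* ∈ (0,1) such that for all x ∈ (0, x*), setting y = x·(−log x)^{1−γ} (which satisfies x < y < 1), one has ( log(−log y)/(−log y)^γ ) / ( 1/(−log x)^γ ) ≥ (1/2)·log(−log x). -/
open Real Set

/-- The quantitative ratio estimate in the proof of Proposition 4.1: for
`y = x·(−log x)^{1−γ}`, one has
`(log(−log y)/(−log y)^γ) / (1/(−log x)^γ) ≥ (1/2)·log(−log x)`. -/
theorem construction_ratio_estimate (γ : ℝ) (hγ0 : 0 < γ) (hγ1 : γ < 1) :
    ∃ xs ∈ Set.Ioo (0:ℝ) 1, ∀ x ∈ Set.Ioo (0:ℝ) xs, ∀ y : ℝ,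
      y = x * (-Real.log x) ^ (1 - γ) →
      (x < y ∧ y < 1) ∧
      (1/2) * Real.log (-Real.log x) ≤
        (Real.log (-Real.log y) / (-Real.log y) ^ γ) / (1 / (-Real.log x) ^ γ) := by
  refine ⟨Real.exp (-4), ⟨Real.exp_pos _, by
    simpa using Real.exp_lt_one_iff.mpr (by norm_num : (-4:ℝ) < 0)⟩, ?_⟩
  rintro x ⟨hx0, hxlt⟩ y hy
  set L : ℝ := -Real.log x with hLdef
  have hlogx : Real.log x < -4 := by
    have := Real.log_lt_log hx0 hxlt
    simpa [Real.log_exp] using this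
  have hL4 : 4 < L := by simp only [hLdef]; linarith
  have hL0 : 0 < L := by linarith
  have hL1 : 1 < L := by linarith
  have hsqrt2 : 2 < Real.sqrt L := by
    have : Real.sqrt 4 < Real.sqrt L := Real.sqrt_lt_sqrt (by norm_num) hL4
    have h4 : Real.sqrt 4 = 2 := by
      rw [show (4:ℝ) = 2^2 by norm_num, Real.sqrt_sq (by norm_num)]
    linarith
  have hsq : Real.sqrt L * Real.sqrt L = L := Real.mul_self_sqrt hL0.le
  have hlogL_pos : 0 < Real.log L := Real.log_pos hL1
  have hlog_le : Real.log L ≤ 2 * Real.sqrt L - 2 := by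
    have h1 : Real.log (Real.sqrt L) ≤ Real.sqrt L - 1 :=
      Real.log_le_sub_one_of_pos (by positivity)
    have h2 : Real.log (Real.sqrt L) = Real.log L / 2 := Real.log_sqrt hL0.le
    linarith
  -- powers
  have hpow_pos : (0:ℝ) < L ^ (1 - γ) := Real.rpow_pos_of_pos hL0 _
  have hpow_gt1 : 1 < L ^ (1 - γ) :=
    Real.one_lt_rpow_iff_of_pos hL0 |>.mpr (Or.inl ⟨hL1, by linarith⟩)
  have hxy : x < y := by
    rw [hy]
    calc x = x * 1 := by ring
    _ < x * L ^ (1 - γ) := by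
      exact (mul_lt_mul_iff_right₀ hx0).mpr hpow_gt1
  have hy0 : 0 < y := by rw [hy]; positivity
  have hlogy : Real.log y = Real.log x + (1 - γ) * Real.log L := by
    rw [hy, Real.log_mul hx0.ne' hpow_pos.ne', Real.log_rpow hL0]
  set M : ℝ := -Real.log y with hMdef
  have hM : M = L - (1 - γ) * Real.log L := by
    simp only [hMdef, hlogy, hLdef]; ring
  have hML : M ≤ L := by
    rw [hM]
    nlinarith [hlogL_pos]
  have hMge : Real.sqrt L ≤ M := by
    rw [hM]
    have h3 : (1 - γ) * Real.log L ≤ Real.log L := by nlinarith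
    nlinarith [hsq, hsqrt2]
  have hM1 : 1 < M := by linarith
  have hM0 : 0 < M := by linarith
  have hy1 : y < 1 := by
    have : Real.log y < 0 := by
      have : 0 < M := hM0
      simp only [hMdef] at this; linarith
    exact (Real.log_neg_iff hy0).mp this
  refine ⟨⟨hxy, hy1⟩, ?_⟩
  have hlogM_pos : 0 < Real.log M := Real.log_pos hM1
  have hhalf : (1/2) * Real.log L ≤ Real.log M := by
    have : Real.log (Real.sqrt L) ≤ Real.log M :=
      Real.log_le_log (by positivity) hMge
    rw [Real.log_sqrt hL0.le] at this
    linarith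
  have hMpow : (0:ℝ) < M ^ γ := Real.rpow_pos_of_pos hM0 _
  have hLpow : (0:ℝ) < L ^ γ := Real.rpow_pos_of_pos hL0 _
  have hpowle : M ^ γ ≤ L ^ γ := Real.rpow_le_rpow hM0.le hML hγ0.le
  have hrhs : (Real.log M / M ^ γ) / (1 / L ^ γ) = Real.log M * (L ^ γ / M ^ γ) := by
    field_simp
  have hratio : 1 ≤ L ^ γ / M ^ γ := (one_le_div hMpow).mpr hpowle
  calc (1/2) * Real.log L ≤ Real.log M := hhalf
    _ = Real.log M * 1 := by ring
    _ ≤ Real.log M * (L ^ γ / M ^ γ) := by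
        exact mul_le_mul_of_nonneg_left hratio hlogM_pos.le
    _ = (Real.log M / M ^ γ) / (1 / L ^ γ) := hrhs.symm
end
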